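/- arXiv:1101.5482 — 9 statements merged into one kernel-verified Lean document; each statement's English description precedes it below -/
import Mathlib

section
/- Let Q be a 3×3 real transition rate matrix with stationary row vector μ (μ·Q = 0), let U = diag(μ1, μ2, μ3) and ν = μ1·Q₁₂ − μ2·Q₂₁. Then U·Q − Qᵀ·U = ν·J, where J is the 3×3 matrix with rows (0, 1, −1), (−1, 0, 1), (1, −1, 0). -/
open Matrix

/-- For a 3×3 transition rate matrix `Q` with stationary row vector `μ`,
`U = diag(μ)` and `ν = μ₁Q₁₂ − μ₂Q₂₁`, one has `U·Q − Qᵀ·U = ν·J` where `J` is the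
antisymmetric matrix with rows `(0,1,−1)`, `(−1,0,1)`, `(1,−1,0)`. -/
theorem UQ_sub_QtU (Q : Matrix (Fin 3) (Fin 3) ℝ) (μ : Fin 3 → ℝ)
    (hoff : ∀ i j : Fin 3, i ≠ j → 0 ≤ Q i j)
    (hrow : ∀ i : Fin 3, ∑ j, Q i j = 0)
    (hstat : μ ᵥ* Q = 0) :
    Matrix.diagonal μ * Q - Qᵀ * Matrix.diagonal μ =
      (μ 0 * Q 0 1 - μ 1 * Q 1 0) • !![(0 : ℝ), 1, -1; -1, 0, 1; 1, -1, 0] := by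
  have e0 := congrFun hstat 0
  have e1 := congrFun hstat 1
  have e2 := congrFun hstat 2
  simp [Matrix.vecMul, dotProduct, Fin.sum_univ_three] at e0 e1 e2
  have r0 := hrow 0; have r1 := hrow 1; have r2 := hrow 2
  simp [Fin.sum_univ_three] at r0 r1 r2
  have m0 : μ 0 * Q 0 0 + μ 0 * Q 0 1 + μ 0 * Q 0 2 = 0 := by linear_combination μ 0 * r0
  have m1 : μ 1 * Q 1 0 + μ 1 * Q 1 1 + μ 1 * Q 1 2 = 0 := by linear_combination μ 1 * r1
  have m2 : μ 2 * Q 2 0 + μ 2 * Q 2 1 + μ 2 * Q 2 2 = 0 := by linear_combination μ 2 * r2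
  ext i j
  fin_cases i <;> fin_cases j <;>
    simp [Matrix.mul_apply, Fin.sum_univ_three, Matrix.diagonal] <;>
    linarith [e0, e1, e2, m0, m1, m2]
end

section
/- Let Q be a 3×3 real transition rate matrix with stationary probability row vector μ, characteristic polynomial X(X + λ1)(X + λ2) with λ1, λ2 ≠ 0, λ1 ≠ λ2, and transition rate flux ν = μ1·Q₁₂ − μ2·Q₂₁. Let Π be a 3×K state-dependent probability matrix with columns φ_k and Λ_k = diag(φ_k). Then for every t > 0 and all observation symbols i, j, the flux of the 2-dimensional likelihood function satisfies μ·Λ_i·exp(tQ)·Λ_j·e − μ·Λ_j·exp(tQ)·Λ_i·e = (ν·A/(λ1 − λ2))·(e^{−λ2 t} − e^{−λ1 t}), where, writing φ_i = (x1, y1, z1)ᵀ and φ_j = (x2, y2, z2)ᵀ, A = (y2 − x2)(x1 − z1) − (x2 − z2)(y1 − x1). -/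
open Matrix Polynomial

/-!
Let `F(M) = diag(μ) M - Mᵀ diag(μ)` be the matrix of net probability fluxes of `M`; the flux of
the likelihood is `φᵢᵀ F(exp tQ) φⱼ`. Because `Qe = 0` and `μQ = 0`, `F(Q)` is antisymmetric with
zero row sums, and on three states every such matrix is a multiple of the unit circulation
`J` around `0 → 1 → 2 → 0`; thus `F(Q) = ν J`, and `φᵢᵀ J φⱼ = A`. The characteristic polynomial
gives `exp(tQ) = 1 + (e^{-λ₁t} - 1) P₁ + (e^{-λ₂t} - 1) P₂` with the Lagrange spectral projections
`Pₖ`, which are quadratic in `Q`. Finally `F(Q²) = F(Q) Q + Qᵀ F(Q) = ν tr(Q) J` with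
`tr Q = -(λ₁ + λ₂)`, so `F(P₁) = -F(P₂) = -ν/(λ₁ - λ₂) J`.
-/

theorem NormedSpace.exp_smul_of_isIdempotentElem {𝔸 : Type*} [NormedRing 𝔸] [NormedAlgebra ℝ 𝔸]
    [CompleteSpace 𝔸] {P : 𝔸} (hP : IsIdempotentElem P) (s : ℝ) :
    exp (s • P) = 1 - P + Real.exp s • P := by
  have hterm (n : ℕ) : (n.factorial⁻¹ : ℝ) • (s • P) ^ n =
      (if n = 0 then 1 - P else 0) + (s ^ n / n.factorial) • P := by
    rcases n with _ | n
    · simp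
    · rw [_root_.smul_pow, hP.pow_succ_eq, smul_smul, if_neg n.succ_ne_zero, zero_add,
        inv_mul_eq_div]
  refine (exp_series_hasSum_exp' (𝕂 := ℝ) (s • P)).unique ?_
  simp only [hterm]
  rw [Real.exp_eq_exp_ℝ]
  exact (hasSum_ite_eq 0 (1 - P)).add ((expSeries_div_hasSum_exp s).smul_const P)

theorem Matrix.exp_smul_of_isIdempotentElem {n : Type*} [Fintype n] [DecidableEq n]
    {P : Matrix n n ℝ} (hP : IsIdempotentElem P) (s : ℝ) :
    NormedSpace.exp (s • P) = 1 - P + Real.exp s • P :=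
  open scoped Norms.Operator in NormedSpace.exp_smul_of_isIdempotentElem hP s

section LagrangeProj

variable {A : Type*} [Ring A] [Algebra ℝ A] {a : A} {l₁ l₂ : ℝ}

/-- The Lagrange basis polynomial `X (X + l₂) / (l₁ (l₁ - l₂))` of the root `-l₁` among
`0, -l₁, -l₂`, evaluated at `a`: the spectral projection of `a` onto its `(-l₁)`-eigenspace. -/
noncomputable def lagrangeProj (a : A) (l₁ l₂ : ℝ) : A := (l₁ * (l₁ - l₂))⁻¹ • (a * a + l₂ • a)

lemma quadratic_mul_quadratic_of_cubic
    (ha : a * a * a + (l₁ + l₂) • (a * a) + (l₁ * l₂) • a = 0) (x y : ℝ) :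
    (a * a + x • a) * (a * a + y • a) =
      ((l₁ - x) * (l₁ - y) + l₂ * (l₁ + l₂ - x - y)) • (a * a)
        + (l₁ * l₂ * (l₁ + l₂ - x - y)) • a := by
  have h₃ : a * a * a = -(l₁ + l₂) • (a * a) - (l₁ * l₂) • a := by
    rw [← sub_eq_zero, ← ha]
    module
  have h₄ : a * a * a * a =
      -(l₁ + l₂) • (-(l₁ + l₂) • (a * a) - (l₁ * l₂) • a) - (l₁ * l₂) • (a * a) := by
    rw [h₃, sub_mul, smul_mul_assoc, smul_mul_assoc, h₃]
  simp only [mul_add, add_mul, smul_mul_assoc, mul_smul_comm, ← mul_assoc]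
  rw [h₄, h₃]
  module

lemma isIdempotentElem_lagrangeProj
    (ha : a * a * a + (l₁ + l₂) • (a * a) + (l₁ * l₂) • a = 0) (h₁ : l₁ ≠ 0) (h₁₂ : l₁ ≠ l₂) :
    IsIdempotentElem (lagrangeProj a l₁ l₂) := by
  have : l₁ - l₂ ≠ 0 := sub_ne_zero.2 h₁₂
  rw [IsIdempotentElem, lagrangeProj, smul_mul_smul_comm, quadratic_mul_quadratic_of_cubic ha]
  match_scalars <;> field_simp <;> ring

lemma lagrangeProj_mul_lagrangeProj_swap
    (ha : a * a * a + (l₁ + l₂) • (a * a) + (l₁ * l₂) • a = 0) :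
    lagrangeProj a l₁ l₂ * lagrangeProj a l₂ l₁ = 0 := by
  rw [lagrangeProj, lagrangeProj, smul_mul_smul_comm, quadratic_mul_quadratic_of_cubic ha]
  match_scalars <;> ring

lemma neg_smul_lagrangeProj_sub_smul_lagrangeProj (h₁ : l₁ ≠ 0) (h₂ : l₂ ≠ 0) (h₁₂ : l₁ ≠ l₂) :
    -l₁ • lagrangeProj a l₁ l₂ - l₂ • lagrangeProj a l₂ l₁ = a := by
  have : l₁ - l₂ ≠ 0 := sub_ne_zero.2 h₁₂
  have : l₂ - l₁ ≠ 0 := sub_ne_zero.2 h₁₂.symm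
  rw [lagrangeProj, lagrangeProj]
  match_scalars <;> field_simp <;> ring

end LagrangeProj

theorem Matrix.exp_smul_eq_of_cubic {n : Type*} [Fintype n] [DecidableEq n]
    {a : Matrix n n ℝ} {l₁ l₂ : ℝ}
    (ha : a * a * a + (l₁ + l₂) • (a * a) + (l₁ * l₂) • a = 0)
    (h₁ : l₁ ≠ 0) (h₂ : l₂ ≠ 0) (h₁₂ : l₁ ≠ l₂) (t : ℝ) :
    NormedSpace.exp (t • a) = 1 + (Real.exp (-l₁ * t) - 1) • lagrangeProj a l₁ l₂
      + (Real.exp (-l₂ * t) - 1) • lagrangeProj a l₂ l₁ := by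
  have ha' : a * a * a + (l₂ + l₁) • (a * a) + (l₂ * l₁) • a = 0 := by
    rwa [add_comm l₂, mul_comm l₂]
  set P₁ := lagrangeProj a l₁ l₂
  set P₂ := lagrangeProj a l₂ l₁
  have hP₁P₂ : P₁ * P₂ = 0 := lagrangeProj_mul_lagrangeProj_swap ha
  have hcomm : Commute P₁ P₂ := hP₁P₂.trans (lagrangeProj_mul_lagrangeProj_swap ha').symm
  calc NormedSpace.exp (t • a) = NormedSpace.exp ((-l₁ * t) • P₁ + (-l₂ * t) • P₂) := by
        rw [← neg_smul_lagrangeProj_sub_smul_lagrangeProj (a := a) h₁ h₂ h₁₂]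
        congr 1
        module
    _ = (1 - P₁ + Real.exp (-l₁ * t) • P₁) * (1 - P₂ + Real.exp (-l₂ * t) • P₂) := by
        rw [exp_add_of_commute _ _ ((hcomm.smul_left _).smul_right _),
          exp_smul_of_isIdempotentElem (isIdempotentElem_lagrangeProj ha h₁ h₁₂),
          exp_smul_of_isIdempotentElem (isIdempotentElem_lagrangeProj ha' h₂ h₁₂.symm)]
    _ = _ := by
        simp only [add_mul, mul_add, sub_mul, mul_sub, one_mul, mul_one,
          smul_mul_assoc, mul_smul_comm, hP₁P₂, smul_zero]
        module

lemma cubic_eq_zero_of_charpoly_eq {n : Type*} [Fintype n] [DecidableEq n] {Q : Matrix n n ℝ}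
    {l₁ l₂ : ℝ} (h : Q.charpoly = X * (X + C l₁) * (X + C l₂)) :
    Q * Q * Q + (l₁ + l₂) • (Q * Q) + (l₁ * l₂) • Q = 0 := by
  have hCH := aeval_self_charpoly Q
  rw [h] at hCH
  simp only [map_mul, map_add, aeval_X, aeval_C, Algebra.algebraMap_eq_smul_one] at hCH
  rw [← hCH]
  simp only [mul_add, add_mul, mul_smul_comm, smul_mul_assoc, mul_one, smul_smul, smul_add,
    mul_assoc]
  module

lemma trace_eq_of_charpoly_eq {Q : Matrix (Fin 3) (Fin 3) ℝ} {l₁ l₂ : ℝ}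
    (h : Q.charpoly = X * (X + C l₁) * (X + C l₂)) : trace Q = -(l₁ + l₂) := by
  have hexpand : X * (X + C l₁) * (X + C l₂) = X ^ 3 + C (l₁ + l₂) * X ^ 2 + C (l₁ * l₂) * X := by
    simp only [C_add, C_mul]
    ring
  rw [trace_eq_neg_charpoly_coeff, h, hexpand]
  simp only [Fintype.card_fin, coeff_add, coeff_C_mul, coeff_X_pow, coeff_X]
  norm_num

section Flux

variable {n : Type*} [Fintype n] [DecidableEq n] (μ : n → ℝ)

/-- `fluxMatrix μ Q 0 1` is the transition rate flux `ν`. -/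
def fluxMatrix : Matrix n n ℝ →ₗ[ℝ] Matrix n n ℝ where
  toFun M := diagonal μ * M - Mᵀ * diagonal μ
  map_add' M N := by
    simp only [Matrix.mul_add, transpose_add, Matrix.add_mul]
    abel
  map_smul' c M := by
    simp only [Matrix.mul_smul, transpose_smul, Matrix.smul_mul, smul_sub, RingHom.id_apply]

lemma fluxMatrix_apply (M : Matrix n n ℝ) (a b : n) :
    fluxMatrix μ M a b = μ a * M a b - μ b * M b a := by
  simp [fluxMatrix, diagonal_mul, mul_diagonal, mul_comm]

@[simp] lemma fluxMatrix_one : fluxMatrix μ 1 = 0 := by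
  simp [fluxMatrix]

lemma transpose_fluxMatrix (M : Matrix n n ℝ) : (fluxMatrix μ M)ᵀ = -fluxMatrix μ M := by
  simp [fluxMatrix, transpose_mul]

lemma fluxMatrix_mul_self (M : Matrix n n ℝ) :
    fluxMatrix μ (M * M) = fluxMatrix μ M * M + Mᵀ * fluxMatrix μ M := by
  simp only [fluxMatrix, LinearMap.coe_mk, AddHom.coe_mk, transpose_mul, Matrix.sub_mul,
    Matrix.mul_sub, Matrix.mul_assoc]
  abel

lemma fluxMatrix_mulVec_one {M : Matrix n n ℝ} (hM : M *ᵥ (fun _ => 1) = 0) (hμ : μ ᵥ* M = 0) :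
    fluxMatrix μ M *ᵥ (fun _ => 1) = 0 := by
  have hdiag : diagonal μ *ᵥ (fun _ => 1) = μ := by
    ext
    simp [mulVec_diagonal]
  simp only [fluxMatrix, LinearMap.coe_mk, AddHom.coe_mk]
  rw [sub_mulVec, ← mulVec_mulVec, ← mulVec_mulVec, hM, hdiag, mulVec_transpose, hμ, mulVec_zero,
    sub_zero]

lemma dotProduct_fluxMatrix_mulVec (M : Matrix n n ℝ) (x y : n → ℝ) :
    x ⬝ᵥ (fluxMatrix μ M *ᵥ y) =
      (μ ᵥ* diagonal x ᵥ* M ᵥ* diagonal y) ⬝ᵥ (fun _ => 1) -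
        (μ ᵥ* diagonal y ᵥ* M ᵥ* diagonal x) ⬝ᵥ (fun _ => 1) := by
  simp only [fluxMatrix_apply, dotProduct, mulVec, vecMul, diagonal_apply, mul_one, mul_ite,
    mul_zero, Finset.sum_ite_eq', Finset.mem_univ, if_true, Finset.mul_sum, Finset.sum_mul, sub_mul,
    mul_sub, Finset.sum_sub_distrib]
  congr 1
  · rw [Finset.sum_comm]
    exact Finset.sum_congr rfl fun _ _ => Finset.sum_congr rfl fun _ _ => by ring
  · exact Finset.sum_congr rfl fun _ _ => Finset.sum_congr rfl fun _ _ => by ring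

end Flux

/-- The unit circulation `J` around `0 → 1 → 2 → 0`. -/
def cycleFlux : Matrix (Fin 3) (Fin 3) ℝ := !![0, 1, -1; -1, 0, 1; 1, -1, 0]

lemma eq_smul_cycleFlux_of_transpose_eq_neg {F : Matrix (Fin 3) (Fin 3) ℝ} (hF : Fᵀ = -F)
    (hF1 : F *ᵥ (fun _ => 1) = 0) : F = F 0 1 • cycleFlux := by
  have h (a b : Fin 3) : F b a = -F a b := by simpa using congrFun₂ hF a b
  have h1 (a : Fin 3) : F a 0 + F a 1 + F a 2 = 0 := by
    simpa [mulVec, dotProduct, Fin.sum_univ_three] using congrFun hF1 a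
  ext a b
  fin_cases a <;> fin_cases b <;> simp [cycleFlux] <;>
    linarith [h 0 0, h 1 1, h 2 2, h 0 1, h 0 2, h 1 2, h1 0, h1 1, h1 2]

lemma cycleFlux_mul_add_transpose_mul {Q : Matrix (Fin 3) (Fin 3) ℝ}
    (hQ : Q *ᵥ (fun _ => 1) = 0) : cycleFlux * Q + Qᵀ * cycleFlux = trace Q • cycleFlux := by
  have hJ1 : cycleFlux *ᵥ (fun _ => 1) = 0 := by
    ext a
    fin_cases a <;> simp [cycleFlux, mulVec, dotProduct, Fin.sum_univ_three]
  have hJ : cycleFluxᵀ = -cycleFlux := by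
    ext a b
    fin_cases a <;> fin_cases b <;> simp [cycleFlux]
  have hanti : (cycleFlux * Q + Qᵀ * cycleFlux)ᵀ = -(cycleFlux * Q + Qᵀ * cycleFlux) := by
    simp [transpose_mul, hJ, add_comm]
  rw [eq_smul_cycleFlux_of_transpose_eq_neg hanti
    (by simp [add_mulVec, ← mulVec_mulVec, hQ, hJ1])]
  have h2 : Q 2 0 + Q 2 1 + Q 2 2 = 0 := by
    simpa [mulVec, dotProduct, Fin.sum_univ_three] using congrFun hQ 2
  congr 1
  simp only [cycleFlux, Matrix.add_apply, mul_apply, transpose_apply, Fin.sum_univ_three, of_apply,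
    cons_val', cons_val_zero, cons_val_one, cons_val, cons_val_fin_one, trace_fin_three]
  linarith

lemma dotProduct_cycleFlux_mulVec (x y : Fin 3 → ℝ) :
    x ⬝ᵥ (cycleFlux *ᵥ y) = (y 1 - y 0) * (x 0 - x 2) - (y 0 - y 2) * (x 1 - x 0) := by
  simp only [cycleFlux, dotProduct, mulVec, Fin.sum_univ_three, of_apply, cons_val', cons_val_zero,
    cons_val_one, cons_val, cons_val_fin_one]
  ring

lemma fluxMatrix_lagrangeProj {μ : Fin 3 → ℝ} {Q : Matrix (Fin 3) (Fin 3) ℝ} {ν l₁ l₂ : ℝ}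
    (hF : fluxMatrix μ Q = ν • cycleFlux) (hQ : Q *ᵥ (fun _ => 1) = 0)
    (htr : trace Q = -(l₁ + l₂)) (h₁ : l₁ ≠ 0) (h₁₂ : l₁ ≠ l₂) :
    fluxMatrix μ (lagrangeProj Q l₁ l₂) = (-ν / (l₁ - l₂)) • cycleFlux := by
  have hsq : fluxMatrix μ (Q * Q) = (ν * trace Q) • cycleFlux := by
    rw [fluxMatrix_mul_self, hF, Matrix.smul_mul, Matrix.mul_smul, ← smul_add,
      cycleFlux_mul_add_transpose_mul hQ, smul_smul]
  have : l₁ - l₂ ≠ 0 := sub_ne_zero.2 h₁₂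
  rw [lagrangeProj, map_smul, map_add, map_smul, hsq, hF, htr, smul_smul, ← add_smul, smul_smul]
  congr 1
  field_simp
  ring

theorem fluxMatrix_exp_smul {μ : Fin 3 → ℝ} {Q : Matrix (Fin 3) (Fin 3) ℝ} {l₁ l₂ : ℝ}
    (hQ : Q *ᵥ (fun _ => 1) = 0) (hμ : μ ᵥ* Q = 0)
    (hchar : Q.charpoly = X * (X + C l₁) * (X + C l₂))
    (h₁ : l₁ ≠ 0) (h₂ : l₂ ≠ 0) (h₁₂ : l₁ ≠ l₂) (t : ℝ) :
    fluxMatrix μ (NormedSpace.exp (t • Q)) =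
      ((μ 0 * Q 0 1 - μ 1 * Q 1 0) * (Real.exp (-l₂ * t) - Real.exp (-l₁ * t)) / (l₁ - l₂)) •
        cycleFlux := by
  have hF : fluxMatrix μ Q = (μ 0 * Q 0 1 - μ 1 * Q 1 0) • cycleFlux := by
    rw [eq_smul_cycleFlux_of_transpose_eq_neg (transpose_fluxMatrix μ Q)
      (fluxMatrix_mulVec_one μ hQ hμ), fluxMatrix_apply]
  have htr := trace_eq_of_charpoly_eq hchar
  have : l₁ - l₂ ≠ 0 := sub_ne_zero.2 h₁₂
  rw [exp_smul_eq_of_cubic (cubic_eq_zero_of_charpoly_eq hchar) h₁ h₂ h₁₂, map_add, map_add,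
    map_smul, map_smul, fluxMatrix_one, fluxMatrix_lagrangeProj hF hQ htr h₁ h₁₂,
    fluxMatrix_lagrangeProj hF hQ (by rw [htr, add_comm]) h₂ h₁₂.symm, zero_add, smul_smul,
    smul_smul, ← add_smul]
  congr 1
  field_simp
  ring

theorem flux_two_dim_likelihood_general (Q : Matrix (Fin 3) (Fin 3) ℝ) (μ : Fin 3 → ℝ)
    (lam1 lam2 : ℝ) {K : ℕ} (E : Matrix (Fin 3) (Fin K) ℝ)
    (hrow : ∀ i : Fin 3, ∑ j, Q i j = 0)
    (hstat : μ ᵥ* Q = 0)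
    (hchar : Q.charpoly = X * (X + C lam1) * (X + C lam2))
    (hlam1 : lam1 ≠ 0) (hlam2 : lam2 ≠ 0) (hne : lam1 ≠ lam2)
    (t : ℝ) (i j : Fin K) :
    (μ ᵥ* Matrix.diagonal (fun a => E a i) ᵥ* NormedSpace.exp (t • Q) ᵥ*
        Matrix.diagonal (fun a => E a j)) ⬝ᵥ (fun _ => (1 : ℝ)) -
      (μ ᵥ* Matrix.diagonal (fun a => E a j) ᵥ* NormedSpace.exp (t • Q) ᵥ*
        Matrix.diagonal (fun a => E a i)) ⬝ᵥ (fun _ => (1 : ℝ)) =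
    (μ 0 * Q 0 1 - μ 1 * Q 1 0) *
        ((E 1 j - E 0 j) * (E 0 i - E 2 i) - (E 0 j - E 2 j) * (E 1 i - E 0 i)) /
        (lam1 - lam2) *
      (Real.exp (-lam2 * t) - Real.exp (-lam1 * t)) := by
  have hQ : Q *ᵥ (fun _ => 1) = 0 := by
    ext a
    simpa [mulVec, dotProduct] using hrow a
  rw [← dotProduct_fluxMatrix_mulVec, fluxMatrix_exp_smul hQ hstat hchar hlam1 hlam2 hne,
    smul_mulVec, dotProduct_smul, dotProduct_cycleFlux_mulVec, smul_eq_mul]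
  ring

/-- Flux of the 2-dimensional likelihood function of the observed
process of a continuous-time three-state hidden Markov model:
`Pr{S₀=i, S_t=j} − Pr{S₀=j, S_t=i} = ν·A/(λ₁−λ₂)·(e^{−λ₂t} − e^{−λ₁t})`. -/
theorem flux_two_dim_likelihood (Q : Matrix (Fin 3) (Fin 3) ℝ) (μ : Fin 3 → ℝ)
    (lam1 lam2 : ℝ) {K : ℕ} (E : Matrix (Fin 3) (Fin K) ℝ)
    (hoff : ∀ i j : Fin 3, i ≠ j → 0 ≤ Q i j)
    (hrow : ∀ i : Fin 3, ∑ j, Q i j = 0)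
    (hpos : ∀ i, 0 < μ i) (hsum : μ 0 + μ 1 + μ 2 = 1)
    (hstat : μ ᵥ* Q = 0)
    (hchar : Q.charpoly = X * (X + C lam1) * (X + C lam2))
    (hlam1 : lam1 ≠ 0) (hlam2 : lam2 ≠ 0) (hne : lam1 ≠ lam2)
    (hE0 : ∀ a k, 0 ≤ E a k) (hE1 : ∀ a : Fin 3, ∑ k, E a k = 1)
    (t : ℝ) (ht : 0 < t) (i j : Fin K) :
    (μ ᵥ* Matrix.diagonal (fun a => E a i) ᵥ* NormedSpace.exp (t • Q) ᵥ*
        Matrix.diagonal (fun a => E a j)) ⬝ᵥ (fun _ => (1 : ℝ)) -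
      (μ ᵥ* Matrix.diagonal (fun a => E a j) ᵥ* NormedSpace.exp (t • Q) ᵥ*
        Matrix.diagonal (fun a => E a i)) ⬝ᵥ (fun _ => (1 : ℝ)) =
    (μ 0 * Q 0 1 - μ 1 * Q 1 0) *
        ((E 1 j - E 0 j) * (E 0 i - E 2 i) - (E 0 j - E 2 j) * (E 1 i - E 0 i)) /
        (lam1 - lam2) *
      (Real.exp (-lam2 * t) - Real.exp (-lam1 * t)) :=
  flux_two_dim_likelihood_general Q μ lam1 lam2 E hrow hstat hchar hlam1 hlam2 hne t i j
end

section
/- Let Q be a 3×3 real transition rate matrix with stationary probability row vector μ, and let Π be a 3×K state-dependent probability matrix with columns φ_k and Λ_k = diag(φ_k). If the rank of Π is 1 or 2, then for every t ≥ 0 and all observation symbols i, j, μ·Λ_i·exp(tQ)·Λ_j·e = μ·Λ_j·exp(tQ)·Λ_i·e; that is, the flux of the 2-dimensional likelihood function of the observed process vanishes. -/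
/-! The likelihood `(x, y) ↦ μ · diag x · exp(tQ) · diag y · e` is a bilinear form `B` on `ℝ³`.
Since `exp(tQ)` fixes `e` on the right and `μ` on the left, `B x e = μ ⬝ x = B e x`.
The vectors `e = Π · 1`, `φ_i` and `φ_j` lie in the column space of `Π`, of dimension at most
two, so they satisfy a nontrivial relation `a e + b φ_i + c φ_j = 0`. Pairing it antisymmetrically
with `φ_i` and with `φ_j` gives `c (B φ_i φ_j - B φ_j φ_i) = 0 = b (B φ_i φ_j - B φ_j φ_i)`,
and `b = c = 0` is impossible because `e ≠ 0`. -/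

open Matrix

namespace Matrix

variable {n : Type*} [Fintype n] [DecidableEq n]

-- `exp` does not depend on the norm; the operator norm only serves to sum its series.
open scoped Norms.Operator in
theorem exp_mulVec_eq_self_of_mulVec_eq_zero {𝕂 : Type*} [RCLike 𝕂] {A : Matrix n n 𝕂}
    {v : n → 𝕂} (h : A *ᵥ v = 0) : NormedSpace.exp A *ᵥ v = v := by
  have hpow : ∀ k ≠ 0, A ^ k *ᵥ v = 0 := by
    rintro k hk
    obtain ⟨k, rfl⟩ := Nat.exists_eq_succ_of_ne_zero hk
    rw [pow_succ, ← mulVec_mulVec, h, mulVec_zero]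
  have hsum := (NormedSpace.exp_series_hasSum_exp' (𝕂 := 𝕂) A).map
    ((mulVecBilin 𝕂 𝕂).flip v) (continuous_id.matrix_mulVec continuous_const)
  refine hsum.unique ?_
  convert hasSum_single (f := fun k : ℕ ↦ (k.factorial : 𝕂)⁻¹ • (A ^ k *ᵥ v)) 0
    fun k hk ↦ by rw [hpow k hk, smul_zero] using 1
  · ext k : 1
    exact smul_mulVec _ _ _
  · simp

theorem vecMul_exp_eq_self_of_vecMul_eq_zero {𝕂 : Type*} [RCLike 𝕂] {A : Matrix n n 𝕂}
    {v : n → 𝕂} (h : v ᵥ* A = 0) : v ᵥ* NormedSpace.exp A = v := by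
  rw [← mulVec_transpose, ← exp_transpose]
  exact exp_mulVec_eq_self_of_mulVec_eq_zero (by rwa [mulVec_transpose])

omit [DecidableEq n] in
theorem not_linearIndependent_of_rank_lt {m K : Type*} [Field K] [Fintype m] (A : Matrix m n K)
    {ι : Type*} [Fintype ι] {v : ι → m → K} (hv : ∀ i, v i ∈ LinearMap.range A.mulVecLin)
    (h : A.rank < Fintype.card ι) : ¬LinearIndependent K v := by
  rw [linearIndependent_iff_card_le_finrank_span, not_le]
  exact (Submodule.finrank_mono (Submodule.span_le.2 (Set.range_subset_iff.2 hv))).trans_lt h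

variable {R : Type*} [CommRing R]

theorem vecMul_diagonal_vecMul_diagonal_dotProduct_one (μ x y : n → R) (P : Matrix n n R) :
    (μ ᵥ* diagonal x ᵥ* P ᵥ* diagonal y) ⬝ᵥ (fun _ ↦ 1) =
      toLinearMap₂' R (diagonal μ * P) x y := by
  have hx : μ ᵥ* diagonal x = x ᵥ* diagonal μ :=
    funext fun i ↦ by simp [vecMul_diagonal, mul_comm]
  have hy : diagonal y *ᵥ 1 = y := funext fun i ↦ by simp [mulVec_diagonal]
  change _ ⬝ᵥ (1 : n → R) = _
  rw [toLinearMap₂'_apply', ← dotProduct_mulVec, hy, hx, ← dotProduct_mulVec,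
    ← dotProduct_mulVec, mulVec_mulVec]

theorem toLinearMap₂'_diagonal_mul_apply_one_comm {μ : n → R} {P : Matrix n n R}
    (hμ : μ ᵥ* P = μ) (hP : P *ᵥ 1 = 1) (z : n → R) :
    toLinearMap₂' R (diagonal μ * P) z (1 : n → R) =
      toLinearMap₂' R (diagonal μ * P) (1 : n → R) z := by
  have h1 : diagonal μ *ᵥ 1 = μ := funext fun i ↦ by simp [mulVec_diagonal]
  have h2 : 1 ᵥ* diagonal μ = μ := funext fun i ↦ by simp [vecMul_diagonal]
  rw [toLinearMap₂'_apply', toLinearMap₂'_apply', ← mulVec_mulVec, hP, h1, dotProduct_mulVec,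
    ← vecMul_vecMul, h2, hμ, dotProduct_comm]

end Matrix

theorem LinearMap.apply_comm_of_not_linearIndependent {K M : Type*} [Field K] [AddCommGroup M]
    [Module K M] (B : M →ₗ[K] M →ₗ[K] K) {e x y : M} (he : e ≠ 0)
    (hBe : ∀ z, B z e = B e z) (hdep : ¬LinearIndependent K ![e, x, y]) : B x y = B y x := by
  obtain ⟨g, hg, k, hk⟩ := Fintype.not_linearIndependent_iff.mp hdep
  simp only [Fin.sum_univ_three, Matrix.cons_val] at hg
  have pair (z : M) : g 1 * (B z x - B x z) + g 2 * (B z y - B y z) = 0 := by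
    have := congrArg (fun w ↦ B z w - B w z) hg
    simp only [map_add, map_smul, LinearMap.add_apply, LinearMap.smul_apply, smul_eq_mul,
      map_zero, LinearMap.zero_apply, hBe z, sub_zero] at this
    linear_combination this
  have hx : g 2 * (B x y - B y x) = 0 := by linear_combination pair x
  have hy : g 1 * (B x y - B y x) = 0 := by linear_combination -pair y
  by_contra hne
  have h2 : g 2 = 0 := by simpa [sub_eq_zero, hne] using hx
  have h1 : g 1 = 0 := by simpa [sub_eq_zero, hne] using hy
  have h0 : g 0 = 0 := by simpa [h1, h2, he] using hg
  fin_cases k <;> simp_all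

theorem flux_two_dim_likelihood_eq_zero_of_rank_le_two_general
    (Q : Matrix (Fin 3) (Fin 3) ℝ) (μ : Fin 3 → ℝ)
    {K : ℕ} (E : Matrix (Fin 3) (Fin K) ℝ)
    (hrow : ∀ i : Fin 3, ∑ j, Q i j = 0)
    (hstat : μ ᵥ* Q = 0)
    (hE1 : ∀ a : Fin 3, ∑ k, E a k = 1)
    (hrank : E.rank = 1 ∨ E.rank = 2)
    (t : ℝ) (i j : Fin K) :
    (μ ᵥ* Matrix.diagonal (fun a => E a i) ᵥ* NormedSpace.exp (t • Q) ᵥ*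
        Matrix.diagonal (fun a => E a j)) ⬝ᵥ (fun _ => (1 : ℝ)) =
      (μ ᵥ* Matrix.diagonal (fun a => E a j) ᵥ* NormedSpace.exp (t • Q) ᵥ*
        Matrix.diagonal (fun a => E a i)) ⬝ᵥ (fun _ => (1 : ℝ)) := by
  have hP : NormedSpace.exp (t • Q) *ᵥ 1 = 1 := exp_mulVec_eq_self_of_mulVec_eq_zero <| by
    ext a
    simp [mulVec, dotProduct, ← Finset.mul_sum, hrow a]
  have hμ : μ ᵥ* NormedSpace.exp (t • Q) = μ :=
    vecMul_exp_eq_self_of_vecMul_eq_zero (by rw [vecMul_smul, hstat, smul_zero])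
  have hdep : ¬LinearIndependent ℝ ![1, fun a ↦ E a i, fun a ↦ E a j] := by
    refine E.not_linearIndependent_of_rank_lt (fun k ↦ ?_) (by rw [Fintype.card_fin]; omega)
    fin_cases k
    · exact ⟨1, funext fun a ↦ by simp [mulVec, dotProduct, hE1 a]⟩
    · exact ⟨Pi.single i 1, mulVec_single_one E i⟩
    · exact ⟨Pi.single j 1, mulVec_single_one E j⟩
  simp only [vecMul_diagonal_vecMul_diagonal_dotProduct_one]
  exact LinearMap.apply_comm_of_not_linearIndependent _ one_ne_zero
    (toLinearMap₂'_diagonal_mul_apply_one_comm hμ hP) hdep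

/-- If the rank of the state-dependent probability matrix is 1 or 2,
then the flux of the 2-dimensional likelihood function of the observed process of a
continuous-time three-state hidden Markov model vanishes. -/
theorem flux_two_dim_likelihood_eq_zero_of_rank_le_two
    (Q : Matrix (Fin 3) (Fin 3) ℝ) (μ : Fin 3 → ℝ)
    {K : ℕ} (E : Matrix (Fin 3) (Fin K) ℝ)
    (hoff : ∀ i j : Fin 3, i ≠ j → 0 ≤ Q i j)
    (hrow : ∀ i : Fin 3, ∑ j, Q i j = 0)
    (hpos : ∀ i, 0 < μ i) (hsum : μ 0 + μ 1 + μ 2 = 1)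
    (hstat : μ ᵥ* Q = 0)
    (hE0 : ∀ a k, 0 ≤ E a k) (hE1 : ∀ a : Fin 3, ∑ k, E a k = 1)
    (hrank : E.rank = 1 ∨ E.rank = 2)
    (t : ℝ) (ht : 0 ≤ t) (i j : Fin K) :
    (μ ᵥ* Matrix.diagonal (fun a => E a i) ᵥ* NormedSpace.exp (t • Q) ᵥ*
        Matrix.diagonal (fun a => E a j)) ⬝ᵥ (fun _ => (1 : ℝ)) =
      (μ ᵥ* Matrix.diagonal (fun a => E a j) ᵥ* NormedSpace.exp (t • Q) ᵥ*
        Matrix.diagonal (fun a => E a i)) ⬝ᵥ (fun _ => (1 : ℝ)) :=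
  flux_two_dim_likelihood_eq_zero_of_rank_le_two_general Q μ E hrow hstat hE1 hrank t i j
end

section
/- Let Q be a 3×3 real transition rate matrix with stationary probability row vector μ, and let Π be a 3×K state-dependent probability matrix with columns φ_k and Λ_k = diag(φ_k). If the underlying Markov process is reversible, i.e. μ_i·Q_{ij} = μ_j·Q_{ji} for all i, j, then the observed process is reversible: for every r ≥ 1, every sequence of observation symbols s_1, …, s_r and all times t_2, …, t_r ≥ 0, μ·Λ_{s_1}·exp(t_2 Q)·Λ_{s_2}·exp(t_3 Q)·⋯·exp(t_r Q)·Λ_{s_r}·e = μ·Λ_{s_r}·exp(t_r Q)·Λ_{s_{r−1}}·exp(t_{r−1} Q)·⋯·exp(t_2 Q)·Λ_{s_1}·e. -/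
open Matrix

/-- The matrix product `Λ_{s₀} · exp(t₀Q) · Λ_{s₁} · ⋯ · exp(t_{r−1}Q) · Λ_{s_r}`
appearing in the finite-dimensional distributions of the observed process of a
continuous-time hidden Markov model with transition rate matrix `Q` and
state-dependent probability matrix `E`. -/
noncomputable def obsProd (Q : Matrix (Fin 3) (Fin 3) ℝ) {K : ℕ}
    (E : Matrix (Fin 3) (Fin K) ℝ) {r : ℕ} (s : Fin (r + 1) → Fin K)
    (t : Fin r → ℝ) : Matrix (Fin 3) (Fin 3) ℝ :=
  Matrix.diagonal (fun a => E a (s 0)) *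
    (List.ofFn fun i : Fin r =>
      NormedSpace.exp (t i • Q) * Matrix.diagonal fun a => E a (s i.succ)).prod

/-!
Detailed balance says `D Q = Qᵀ D` for `D = diagonal μ`, i.e. `Q` is self-adjoint for the
`μ`-weighted inner product. Hence so are every `exp (t Q)` and every diagonal matrix, and a product
of such matrices is intertwined by `D` with the transpose of the reversed product:
`D (Λ₀ e^{t₁Q} ⋯ Λᵣ) = (Λᵣ ⋯ e^{t₁Q} Λ₀)ᵀ D`. Summing all entries of both sides gives the two
probabilities of the statement.
-/

namespace Matrix

variable {m : Type*} [Fintype m] [DecidableEq m]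

theorem semiconjBy_diagonal_transpose_of_detailed_balance {R : Type*} [CommSemiring R]
    {μ : m → R} {Q : Matrix m m R} (hrev : ∀ i j, μ i * Q i j = μ j * Q j i) :
    SemiconjBy (diagonal μ) Q Qᵀ := by
  ext i j
  simp only [diagonal_mul, mul_diagonal, transpose_apply]
  rw [hrev, mul_comm]

theorem semiconjBy_diagonal_transpose_diagonal {R : Type*} [CommSemiring R] (μ v : m → R) :
    SemiconjBy (diagonal μ) (diagonal v) (diagonal v)ᵀ := by
  rw [diagonal_transpose]
  exact commute_diagonal μ v

open scoped Norms.Operator in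
theorem semiconjBy_exp_transpose {R : Type*} [NormedCommRing R] [NormedAlgebra ℚ R]
    [CompleteSpace R] {D A : Matrix m m R} (h : SemiconjBy D A Aᵀ) :
    SemiconjBy D (NormedSpace.exp A) (NormedSpace.exp A)ᵀ := by
  rw [← Matrix.exp_transpose]
  -- the operator-norm uniformity on matrices is the product one only up to unfolding
  refine @SemiconjBy.exp_right _ _ _ ?_ _ _ _ h
  exact inferInstanceAs (CompleteSpace (m → m → R))

theorem vecMul_dotProduct_one_eq_of_semiconjBy {R : Type*} [CommSemiring R] {μ : m → R}
    {M N : Matrix m m R} (h : SemiconjBy (diagonal μ) M Nᵀ) :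
    (μ ᵥ* M) ⬝ᵥ (fun _ => 1) = (μ ᵥ* N) ⬝ᵥ (fun _ => 1) := by
  have hμ : μ = (fun _ => 1) ᵥ* diagonal μ := by ext; simp [vecMul_diagonal]
  have hμ_mulVec : diagonal μ *ᵥ (fun _ => 1) = μ := by ext; simp [mulVec_diagonal]
  calc (μ ᵥ* M) ⬝ᵥ (fun _ => 1)
      = ((N *ᵥ fun _ => 1) ᵥ* diagonal μ) ⬝ᵥ (fun _ => 1) := by
        rw [hμ, vecMul_vecMul, h.eq, ← vecMul_vecMul, vecMul_transpose, ← hμ]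
    _ = (μ ᵥ* N) ⬝ᵥ (fun _ => 1) := by
        rw [← dotProduct_mulVec, hμ_mulVec, dotProduct_comm, dotProduct_mulVec]

end Matrix

section obsProd

variable (Q : Matrix (Fin 3) (Fin 3) ℝ) {K : ℕ} (E : Matrix (Fin 3) (Fin K) ℝ) {r : ℕ}

theorem obsProd_succ (s : Fin (r + 2) → Fin K) (t : Fin (r + 1) → ℝ) :
    obsProd Q E s t =
      obsProd Q E (s ∘ Fin.castSucc) (t ∘ Fin.castSucc) *
        (NormedSpace.exp (t (Fin.last r) • Q) * diagonal fun a => E a (s (Fin.last (r + 1)))) := by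
  unfold obsProd
  rw [List.ofFn_succ']
  simp only [List.concat_eq_append, List.prod_append, List.prod_cons, List.prod_nil,
    Function.comp_apply, mul_one, ← mul_assoc, Fin.succ_castSucc, Fin.castSucc_zero,
    Fin.succ_last]

theorem obsProd_rev_succ (s : Fin (r + 2) → Fin K) (t : Fin (r + 1) → ℝ) :
    obsProd Q E (s ∘ Fin.rev) (t ∘ Fin.rev) =
      (diagonal fun a => E a (s (Fin.last (r + 1)))) * NormedSpace.exp (t (Fin.last r) • Q) *
        obsProd Q E (s ∘ Fin.castSucc ∘ Fin.rev) (t ∘ Fin.castSucc ∘ Fin.rev) := by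
  unfold obsProd
  rw [List.ofFn_succ]
  simp only [List.prod_cons, Function.comp_apply, ← mul_assoc, Fin.rev_zero, Fin.rev_succ]

theorem semiconjBy_obsProd {μ : Fin 3 → ℝ} (hQ : SemiconjBy (diagonal μ) Q Qᵀ) :
    ∀ (s : Fin (r + 1) → Fin K) (t : Fin r → ℝ),
      SemiconjBy (diagonal μ) (obsProd Q E s t) (obsProd Q E (s ∘ Fin.rev) (t ∘ Fin.rev))ᵀ := by
  induction r with
  | zero =>
    intro s t
    have hs : s ∘ Fin.rev = s := funext fun i => by fin_cases i; rfl
    simpa [obsProd, hs] using semiconjBy_diagonal_transpose_diagonal μ _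
  | succ r ih =>
    intro s t
    rw [obsProd_succ, obsProd_rev_succ, transpose_mul, transpose_mul]
    exact (ih _ _).mul_right ((semiconjBy_exp_transpose (hQ.smul_right _)).mul_right
      (semiconjBy_diagonal_transpose_diagonal μ _))

end obsProd

theorem observed_reversible_of_reversible_general
    (Q : Matrix (Fin 3) (Fin 3) ℝ) (μ : Fin 3 → ℝ)
    {K : ℕ} (E : Matrix (Fin 3) (Fin K) ℝ)
    (hrev : ∀ i j : Fin 3, μ i * Q i j = μ j * Q j i) :
    ∀ (r : ℕ) (s : Fin (r + 1) → Fin K) (t : Fin r → ℝ), (∀ i, 0 ≤ t i) →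
      (μ ᵥ* obsProd Q E s t) ⬝ᵥ (fun _ => (1 : ℝ)) =
        (μ ᵥ* obsProd Q E (s ∘ Fin.rev) (t ∘ Fin.rev)) ⬝ᵥ (fun _ => (1 : ℝ)) := by
  intro r s t _
  exact vecMul_dotProduct_one_eq_of_semiconjBy
    (semiconjBy_obsProd Q E (semiconjBy_diagonal_transpose_of_detailed_balance hrev) s t)

/-- If the underlying Markov process is reversible, then the observed
process of the continuous-time three-state hidden Markov model is reversible. -/
theorem observed_reversible_of_reversible
    (Q : Matrix (Fin 3) (Fin 3) ℝ) (μ : Fin 3 → ℝ)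
    {K : ℕ} (E : Matrix (Fin 3) (Fin K) ℝ)
    (hoff : ∀ i j : Fin 3, i ≠ j → 0 ≤ Q i j)
    (hrow : ∀ i : Fin 3, ∑ j, Q i j = 0)
    (hpos : ∀ i, 0 < μ i) (hsum : μ 0 + μ 1 + μ 2 = 1)
    (hstat : μ ᵥ* Q = 0)
    (hE0 : ∀ a k, 0 ≤ E a k) (hE1 : ∀ a : Fin 3, ∑ k, E a k = 1)
    (hrev : ∀ i j : Fin 3, μ i * Q i j = μ j * Q j i) :
    ∀ (r : ℕ) (s : Fin (r + 1) → Fin K) (t : Fin r → ℝ), (∀ i, 0 ≤ t i) →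
      (μ ᵥ* obsProd Q E s t) ⬝ᵥ (fun _ => (1 : ℝ)) =
        (μ ᵥ* obsProd Q E (s ∘ Fin.rev) (t ∘ Fin.rev)) ⬝ᵥ (fun _ => (1 : ℝ)) :=
  observed_reversible_of_reversible_general Q μ E hrev
end

section
/- Let Q be an irreducible 3×3 real transition rate matrix with stationary probability row vector μ, and let Π be a 3×K state-dependent probability matrix with columns φ_k and Λ_k = diag(φ_k). If the underlying Markov process is irreversible (i.e. μ_i·Q_{ij} ≠ μ_j·Q_{ji} for some i, j) and the rank of Π is 3, then the observed process is irreversible: there exist r ≥ 1, observation symbols s_1, …, s_r and times t_2, …, t_r ≥ 0 with μ·Λ_{s_1}·exp(t_2 Q)·Λ_{s_2}·⋯·exp(t_r Q)·Λ_{s_r}·e ≠ μ·Λ_{s_r}·exp(t_r Q)·Λ_{s_{r−1}}·⋯·exp(t_2 Q)·Λ_{s_1}·e. -/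
/-!
Detailed balance of `μ` for a matrix `M` says that `diagonal μ * M` is symmetric. If it fails
for `Q`, it fails for `exp (τ • Q)` at some `τ > 0`: the flow
`τ ↦ μ i * exp (τ • Q) i j - μ j * exp (τ • Q) j i` vanishes at `0` with nonzero derivative
`μ i * Q i j - μ j * Q j i`. The probability of observing `a` and then `b` at lag `τ` is
`(Eᵀ * (diagonal μ * exp (τ • Q)) * E) a b`, and as `E` has a right inverse `F`, the matrix
`diagonal μ * exp (τ • Q) = Fᵀ * (Eᵀ * (diagonal μ * exp (τ • Q)) * E) * F` would be symmetric
if the observed two-point probabilities were. So some pair `(a, b)` is observed with different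
probabilities in the two orders.
-/

open Matrix

theorem HasDerivAt.exists_gt_ne {F : Type*} [NormedAddCommGroup F] [NormedSpace ℝ F]
    {f : ℝ → F} {f' : F} {x : ℝ} (hf : HasDerivAt f f' x) (hf' : f' ≠ 0) :
    ∃ y, x < y ∧ f y ≠ f x :=
  (((hf.eventually_ne hf').filter_mono (nhdsGT_le_nhdsNE x)).and
    self_mem_nhdsWithin).exists.imp fun _ h => ⟨h.2, h.1⟩

namespace Matrix

theorem IsSymm.transpose_mul_mul {m n R : Type*} [Fintype m] [CommSemiring R]
    {A : Matrix m m R} (hA : A.IsSymm) (B : Matrix m n R) : (Bᵀ * A * B).IsSymm := by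
  simp [IsSymm, Matrix.mul_assoc, hA.eq]

theorem exists_mul_eq_one_of_rank_eq_card {m n K : Type*} [Fintype m] [Fintype n]
    [DecidableEq m] [Field K] {E : Matrix m n K} (hE : E.rank = Fintype.card m) :
    ∃ F : Matrix n m K, E * F = 1 := by
  refine mulVec_surjective_iff_exists_right_inverse.mp fun y => ?_
  have : LinearMap.range E.mulVecLin = ⊤ :=
    Submodule.eq_top_of_finrank_eq (by rw [← rank, hE, Module.finrank_fintype_fun_eq_card])
  exact LinearMap.range_eq_top.mp this y

theorem isSymm_of_isSymm_transpose_mul_mul {m n R : Type*} [Fintype m] [Fintype n]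
    [DecidableEq m] [CommSemiring R] {A : Matrix m m R} {E : Matrix m n R} {F : Matrix n m R}
    (hEF : E * F = 1) (h : (Eᵀ * A * E).IsSymm) : A.IsSymm := by
  have hA : A = Fᵀ * (Eᵀ * A * E) * F :=
    calc A = (E * F)ᵀ * A * (E * F) := by simp [hEF]
      _ = Fᵀ * (Eᵀ * A * E) * F := by simp only [transpose_mul, Matrix.mul_assoc]
  rw [hA]
  exact h.transpose_mul_mul F

section exp

attribute [local instance] Matrix.linftyOpNormedRing Matrix.linftyOpNormedAlgebra

theorem hasDerivAt_exp_smul_apply {n : Type*} [Fintype n] [DecidableEq n]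
    (Q : Matrix n n ℝ) (i j : n) (t : ℝ) :
    HasDerivAt (fun u : ℝ => NormedSpace.exp (u • Q) i j) ((Q * NormedSpace.exp (t • Q)) i j) t :=
  (entryLinearMap ℝ ℝ i j).toContinuousLinearMap.hasFDerivAt.comp_hasDerivAt t
    (hasDerivAt_exp_smul_const' Q t)

end exp

theorem isSymm_diagonal_mul_iff {n R : Type*} [Fintype n] [DecidableEq n] [Semiring R]
    {μ : n → R} {M : Matrix n n R} :
    (diagonal μ * M).IsSymm ↔ ∀ i j, μ i * M i j = μ j * M j i := by
  simp only [IsSymm.ext_iff, diagonal_mul]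
  exact forall_comm

theorem exists_pos_not_isSymm_diagonal_mul_exp_smul {n : Type*} [Fintype n] [DecidableEq n]
    {μ : n → ℝ} {Q : Matrix n n ℝ} (hQ : ¬ (diagonal μ * Q).IsSymm) :
    ∃ τ : ℝ, 0 < τ ∧ ¬ (diagonal μ * NormedSpace.exp (τ • Q)).IsSymm := by
  obtain ⟨i, j, hij⟩ : ∃ i j, μ i * Q i j - μ j * Q j i ≠ 0 := by
    simpa [isSymm_diagonal_mul_iff, sub_eq_zero] using hQ
  have hflow : HasDerivAt
      (fun u : ℝ => μ i * NormedSpace.exp (u • Q) i j - μ j * NormedSpace.exp (u • Q) j i)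
      (μ i * Q i j - μ j * Q j i) 0 := by
    have hexp (k l : n) : HasDerivAt (fun u : ℝ => NormedSpace.exp (u • Q) k l) (Q k l) 0 := by
      simpa using hasDerivAt_exp_smul_apply Q k l 0
    exact ((hexp i j).const_mul (μ i)).sub ((hexp j i).const_mul (μ j))
  obtain ⟨τ, hτ, hne⟩ := hflow.exists_gt_ne hij
  refine ⟨τ, hτ, fun h => hne ?_⟩
  have h0 : (diagonal μ * NormedSpace.exp ((0 : ℝ) • Q)).IsSymm := by simp
  rw [sub_eq_zero.2 (isSymm_diagonal_mul_iff.1 h i j),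
    sub_eq_zero.2 (isSymm_diagonal_mul_iff.1 h0 i j)]

end Matrix

theorem vecMul_obsProd_pair_dotProduct_one (Q : Matrix (Fin 3) (Fin 3) ℝ) (μ : Fin 3 → ℝ)
    {K : ℕ} (E : Matrix (Fin 3) (Fin K) ℝ) (a b : Fin K) (τ : ℝ) :
    (μ ᵥ* obsProd Q E ![a, b] (fun _ => τ)) ⬝ᵥ (fun _ => 1) =
      (Eᵀ * (diagonal μ * NormedSpace.exp (τ • Q)) * E) a b := by
  simp [obsProd, vecMul, dotProduct, mul_apply, diagonal_apply, Fin.sum_univ_three]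
  ring

theorem observed_irreversible_of_rank_three_general
    (Q : Matrix (Fin 3) (Fin 3) ℝ) (μ : Fin 3 → ℝ)
    {K : ℕ} (E : Matrix (Fin 3) (Fin K) ℝ)
    (hirrev : ∃ i j : Fin 3, μ i * Q i j ≠ μ j * Q j i)
    (hrank : E.rank = 3) :
    ∃ (r : ℕ) (s : Fin (r + 1) → Fin K) (t : Fin r → ℝ), (∀ i, 0 ≤ t i) ∧
      (μ ᵥ* obsProd Q E s t) ⬝ᵥ (fun _ => (1 : ℝ)) ≠
        (μ ᵥ* obsProd Q E (s ∘ Fin.rev) (t ∘ Fin.rev)) ⬝ᵥ (fun _ => (1 : ℝ)) := by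
  have hQ : ¬ (diagonal μ * Q).IsSymm := by
    simpa [isSymm_diagonal_mul_iff] using hirrev
  obtain ⟨τ, hτ, hP⟩ := exists_pos_not_isSymm_diagonal_mul_exp_smul hQ
  obtain ⟨F, hEF⟩ := exists_mul_eq_one_of_rank_eq_card (E := E) (by simpa using hrank)
  obtain ⟨b, a, hab⟩ : ∃ b a,
      (Eᵀ * (diagonal μ * NormedSpace.exp (τ • Q)) * E) a b ≠
        (Eᵀ * (diagonal μ * NormedSpace.exp (τ • Q)) * E) b a := by
    simpa [IsSymm.ext_iff] using mt (isSymm_of_isSymm_transpose_mul_mul hEF) hP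
  refine ⟨1, ![a, b], fun _ => τ, fun _ => hτ.le, ?_⟩
  have hrev : (![a, b] ∘ Fin.rev : Fin 2 → Fin K) = ![b, a] := by
    ext i; fin_cases i <;> rfl
  rw [hrev, Function.comp_def, vecMul_obsProd_pair_dotProduct_one,
    vecMul_obsProd_pair_dotProduct_one]
  exact hab

/-- If the underlying irreducible Markov process is irreversible and
the rank of the state-dependent probability matrix is 3, then the observed process
of the continuous-time three-state hidden Markov model is irreversible. -/
theorem observed_irreversible_of_rank_three
    (Q : Matrix (Fin 3) (Fin 3) ℝ) (μ : Fin 3 → ℝ)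
    {K : ℕ} (E : Matrix (Fin 3) (Fin K) ℝ)
    (hoff : ∀ i j : Fin 3, i ≠ j → 0 ≤ Q i j)
    (hrow : ∀ i : Fin 3, ∑ j, Q i j = 0)
    (hirr1 : (Q 0 1 + Q 0 2) * (Q 1 0 + Q 1 2) * (Q 2 0 + Q 2 1) > 0)
    (hirr2 : Q 1 0 + Q 2 0 > 0) (hirr3 : Q 0 1 + Q 2 1 > 0)
    (hirr4 : Q 0 2 + Q 1 2 > 0)
    (hpos : ∀ i, 0 < μ i) (hsum : μ 0 + μ 1 + μ 2 = 1)
    (hstat : μ ᵥ* Q = 0)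
    (hE0 : ∀ a k, 0 ≤ E a k) (hE1 : ∀ a : Fin 3, ∑ k, E a k = 1)
    (hirrev : ∃ i j : Fin 3, μ i * Q i j ≠ μ j * Q j i)
    (hrank : E.rank = 3) :
    ∃ (r : ℕ) (s : Fin (r + 1) → Fin K) (t : Fin r → ℝ), (∀ i, 0 ≤ t i) ∧
      (μ ᵥ* obsProd Q E s t) ⬝ᵥ (fun _ => (1 : ℝ)) ≠
        (μ ᵥ* obsProd Q E (s ∘ Fin.rev) (t ∘ Fin.rev)) ⬝ᵥ (fun _ => (1 : ℝ)) :=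
  observed_irreversible_of_rank_three_general Q μ E hirrev hrank
end

section
/- Let Q be a 3×3 real transition rate matrix with stationary probability row vector μ, and let Π be a 3×K state-dependent probability matrix with columns φ_k and Λ_k = diag(φ_k). If two rows of Π are equal (as vectors), then the observed process is reversible: for every r ≥ 1, every sequence of observation symbols s_1, …, s_r and all times t_2, …, t_r ≥ 0, μ·Λ_{s_1}·exp(t_2 Q)·Λ_{s_2}·⋯·exp(t_r Q)·Λ_{s_r}·e = μ·Λ_{s_r}·exp(t_r Q)·Λ_{s_{r−1}}·⋯·exp(t_2 Q)·Λ_{s_1}·e. -/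
/-!
Let `m` be the state whose row of `Π` differs from the two equal ones. Then every `Λ_k` is
`c • 1 + single m m d`, so pushing a row vector through `Λ_k exp(tQ)` gives a combination of the
same vector advanced by time `t` and of `e_m exp(tQ)`, the latter weighted by the `m`-th
coordinate of the vector; columns behave in the same way from the right. With boundary rows
`μ` and `e_m exp(aQ)`, and matching columns, the form
`⟨left x | Λ_{s_1} exp(t_2 Q) ⋯ Λ_{s_r} | right y⟩` therefore obeys the same recursion when the
word is read from the left as when its reverse is read from the right, and its base case is
symmetric in `x` and `y`. Induction on `r` gives reversibility of the form; at the stationary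
boundaries it is `μ_m` times the probability in question.
-/

open Matrix

theorem Fin.init_comp_rev {α : Type*} {n : ℕ} (f : Fin (n + 1) → α) :
    Fin.init (f ∘ Fin.rev) = Fin.tail f ∘ Fin.rev := by
  funext i
  simp [Fin.init, Fin.tail, Fin.rev_castSucc]

theorem Fin.exists_forall_ne_imp_eq_or_eq {i j : Fin 3} (hij : i ≠ j) :
    ∃ m, ∀ a, a ≠ m → a = i ∨ a = j := by
  revert i j
  decide

namespace Matrix

open NormedSpace

variable {ι : Type*} [DecidableEq ι]

theorem diagonal_eq_smul_one_add_single {v : ι → ℝ} {c : ℝ} {m : ι}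
    (h : ∀ a, a ≠ m → v a = c) : diagonal v = c • 1 + single m m (v m - c) := by
  ext a b
  rcases eq_or_ne a b with rfl | hab
  · rcases eq_or_ne a m with rfl | ha
    · simp
    · simp [Ne.symm ha, h a ha]
  · simp only [diagonal_apply_ne _ hab, Matrix.add_apply, Matrix.smul_apply, one_apply_ne hab,
      single_apply, smul_zero, zero_add]
    rw [if_neg (fun hm => hab (hm.1.symm.trans hm.2))]

variable [Fintype ι]

theorem exp_mulVec_of_mulVec_eq_zero {A : Matrix ι ι ℝ} {w : ι → ℝ} (h : A *ᵥ w = 0) :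
    exp A *ᵥ w = w := by
  let _ : NormedRing (Matrix ι ι ℝ) := Matrix.linftyOpNormedRing
  let _ : NormedAlgebra ℝ (Matrix ι ι ℝ) := Matrix.linftyOpNormedAlgebra
  have hmap := (expSeries_summable' (𝕂 := ℝ) A).map_tsum
    (mulVec.addMonoidHomLeft w) (continuous_id.matrix_mulVec continuous_const)
  rw [exp_eq_tsum ℝ]
  refine hmap.trans ((tsum_eq_single 0 fun n hn => ?_).trans (by simp [mulVec.addMonoidHomLeft]))
  obtain ⟨k, rfl⟩ := Nat.exists_eq_succ_of_ne_zero hn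
  simp [mulVec.addMonoidHomLeft, smul_mulVec, pow_succ, ← mulVec_mulVec, h]

theorem vecMul_exp_of_vecMul_eq_zero {A : Matrix ι ι ℝ} {v : ι → ℝ} (h : v ᵥ* A = 0) :
    v ᵥ* exp A = v := by
  rw [← mulVec_transpose, ← exp_transpose]
  exact exp_mulVec_of_mulVec_eq_zero (by rwa [mulVec_transpose])

theorem exp_add_smul (Q : Matrix ι ι ℝ) (s t : ℝ) :
    exp ((s + t) • Q) = exp (s • Q) * exp (t • Q) := by
  rw [add_smul, exp_add_of_commute _ _ (((Commute.refl Q).smul_left s).smul_right t)]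

theorem smul_one_add_single_mulVec (c d : ℝ) (m : ι) (w : ι → ℝ) :
    (c • 1 + single m m d) *ᵥ w = c • w + (d * w m) • Pi.single m 1 := by
  rw [add_mulVec, smul_mulVec, one_mulVec, single_mulVec_eq]

theorem vecMul_smul_one_add_single (v : ι → ℝ) (c d : ℝ) (m : ι) :
    v ᵥ* (c • 1 + single m m d) = c • v + (d * v m) • Pi.single m 1 := by
  rw [← mulVec_transpose, transpose_add, transpose_smul, transpose_one, transpose_single,
    smul_one_add_single_mulVec]

end Matrix

namespace HiddenMarkov

open NormedSpace

variable {ι : Type*} [Fintype ι] [DecidableEq ι]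

noncomputable def interleavedProd (P : ℝ → Matrix ι ι ℝ) {r : ℕ} (L : Fin (r + 1) → Matrix ι ι ℝ)
    (t : Fin r → ℝ) : Matrix ι ι ℝ :=
  L 0 * (List.ofFn fun i => P (t i) * L i.succ).prod

section InterleavedProd

variable (P : ℝ → Matrix ι ι ℝ)

theorem interleavedProd_zero (L : Fin 1 → Matrix ι ι ℝ) (t : Fin 0 → ℝ) :
    interleavedProd P L t = L 0 := by
  simp [interleavedProd]

theorem interleavedProd_succ {r : ℕ} (L : Fin (r + 2) → Matrix ι ι ℝ) (t : Fin (r + 1) → ℝ) :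
    interleavedProd P L t = L 0 * P (t 0) * interleavedProd P (Fin.tail L) (Fin.tail t) := by
  simp [interleavedProd, List.ofFn_succ, Fin.tail, mul_assoc]

theorem interleavedProd_succ' {r : ℕ} (L : Fin (r + 2) → Matrix ι ι ℝ) (t : Fin (r + 1) → ℝ) :
    interleavedProd P L t =
      interleavedProd P (Fin.init L) (Fin.init t) * P (t (Fin.last r)) * L (Fin.last (r + 1)) := by
  rw [interleavedProd, interleavedProd, List.ofFn_succ', List.concat_eq_append, List.prod_append]
  simp [Fin.init, mul_assoc]

end InterleavedProd

section Boundary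

variable (Q : Matrix ι ι ℝ) (μ : ι → ℝ) (m : ι)

-- `leftBoundary x` is the law of the chain when stationary (`x = ⊤`) or when started in `m` a
-- time `a ≥ 0` ago (`x = a`). At `⊤` the column `rightBoundary` is scaled by `μ m`, which makes
-- the pairing `leftBoundary x ⬝ᵥ rightBoundary y` symmetric in `x` and `y`.
noncomputable def leftBoundary : WithTop ℝ → ι → ℝ
  | ⊤ => μ
  | (a : ℝ) => Pi.single m 1 ᵥ* exp (a • Q)

noncomputable def rightBoundary : WithTop ℝ → ι → ℝ
  | ⊤ => μ m • 1
  | (a : ℝ) => exp (a • Q) *ᵥ Pi.single m 1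

noncomputable def boundaryForm (x : WithTop ℝ) (W : Matrix ι ι ℝ) (y : WithTop ℝ) : ℝ :=
  leftBoundary Q μ m x ᵥ* W ⬝ᵥ rightBoundary Q μ m y

@[simp] theorem leftBoundary_top : leftBoundary Q μ m ⊤ = μ := rfl

@[simp] theorem leftBoundary_coe (a : ℝ) :
    leftBoundary Q μ m a = Pi.single m 1 ᵥ* exp (a • Q) := rfl

@[simp] theorem rightBoundary_top : rightBoundary Q μ m ⊤ = μ m • 1 := rfl

@[simp] theorem rightBoundary_coe (b : ℝ) :
    rightBoundary Q μ m b = exp (b • Q) *ᵥ Pi.single m 1 := rfl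

variable {Q μ}

theorem leftBoundary_vecMul_exp (hμ : μ ᵥ* Q = 0) (x : WithTop ℝ) (t : ℝ) :
    leftBoundary Q μ m x ᵥ* exp (t • Q) = leftBoundary Q μ m (x + t) := by
  induction x with
  | top => rw [WithTop.top_add, leftBoundary_top,
      vecMul_exp_of_vecMul_eq_zero (by rw [vecMul_smul, hμ, smul_zero])]
  | coe a => rw [← WithTop.coe_add, leftBoundary_coe, leftBoundary_coe, exp_add_smul,
      vecMul_vecMul]

theorem exp_mulVec_rightBoundary (hQ : Q *ᵥ 1 = 0) (t : ℝ) (y : WithTop ℝ) :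
    exp (t • Q) *ᵥ rightBoundary Q μ m y = rightBoundary Q μ m (t + y) := by
  induction y with
  | top => rw [WithTop.add_top, rightBoundary_top, mulVec_smul,
      exp_mulVec_of_mulVec_eq_zero (by rw [smul_mulVec, hQ, smul_zero])]
  | coe b => rw [← WithTop.coe_add, rightBoundary_coe, rightBoundary_coe, exp_add_smul,
      mulVec_mulVec]

theorem leftBoundary_apply_self (x : WithTop ℝ) :
    leftBoundary Q μ m x m = rightBoundary Q μ m x m := by
  induction x with
  | top => simp
  | coe a => simp

theorem leftBoundary_dotProduct_rightBoundary_comm (hμ : μ ᵥ* Q = 0) (hQ : Q *ᵥ 1 = 0)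
    (x y : WithTop ℝ) :
    leftBoundary Q μ m x ⬝ᵥ rightBoundary Q μ m y =
      leftBoundary Q μ m y ⬝ᵥ rightBoundary Q μ m x := by
  have coe_right (x : WithTop ℝ) (b : ℝ) :
      leftBoundary Q μ m x ⬝ᵥ rightBoundary Q μ m b =
        leftBoundary Q μ m b ⬝ᵥ rightBoundary Q μ m x :=
    calc _ = leftBoundary Q μ m (x + b) m := by
          rw [rightBoundary_coe, dotProduct_mulVec, leftBoundary_vecMul_exp m hμ,
            dotProduct_single_one]
      _ = rightBoundary Q μ m (b + x) m := by rw [leftBoundary_apply_self, add_comm]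
      _ = _ := by
          rw [leftBoundary_coe, ← dotProduct_mulVec, exp_mulVec_rightBoundary m hQ,
            single_one_dotProduct]
  induction y with
  | top =>
    induction x with
    | top => rfl
    | coe a => exact (coe_right ⊤ a).symm
  | coe b => exact coe_right x b

theorem boundaryForm_smul_one_add_single_mul (hμ : μ ᵥ* Q = 0) (x y : WithTop ℝ) (c d t : ℝ)
    (W : Matrix ι ι ℝ) :
    boundaryForm Q μ m x ((c • 1 + single m m d) * exp (t • Q) * W) y =
      c * boundaryForm Q μ m (x + t) W y +
        d * leftBoundary Q μ m x m * boundaryForm Q μ m t W y := by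
  simp only [boundaryForm, ← vecMul_vecMul, vecMul_smul_one_add_single, add_vecMul, smul_vecMul,
    leftBoundary_vecMul_exp m hμ, add_dotProduct, smul_dotProduct, smul_eq_mul]
  rfl

theorem boundaryForm_mul_mul_smul_one_add_single (hQ : Q *ᵥ 1 = 0) (x y : WithTop ℝ) (c d t : ℝ)
    (W : Matrix ι ι ℝ) :
    boundaryForm Q μ m x (W * exp (t • Q) * (c • 1 + single m m d)) y =
      c * boundaryForm Q μ m x W (t + y) +
        d * rightBoundary Q μ m y m * boundaryForm Q μ m x W t := by
  simp only [boundaryForm, ← dotProduct_mulVec, ← mulVec_mulVec, smul_one_add_single_mulVec,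
    mulVec_add, mulVec_smul, exp_mulVec_rightBoundary m hQ, dotProduct_add, dotProduct_smul,
    smul_eq_mul]
  rfl

theorem boundaryForm_smul_one_add_single_comm (hμ : μ ᵥ* Q = 0) (hQ : Q *ᵥ 1 = 0)
    (x y : WithTop ℝ) (c d : ℝ) :
    boundaryForm Q μ m x (c • 1 + single m m d) y =
      boundaryForm Q μ m y (c • 1 + single m m d) x := by
  simp only [boundaryForm, vecMul_smul_one_add_single, add_dotProduct, smul_dotProduct,
    single_one_dotProduct, leftBoundary_apply_self,
    leftBoundary_dotProduct_rightBoundary_comm m hμ hQ x y]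
  ring

theorem boundaryForm_interleavedProd_rev (hμ : μ ᵥ* Q = 0) (hQ : Q *ᵥ 1 = 0) {r : ℕ}
    (L : Fin (r + 1) → Matrix ι ι ℝ) (hL : ∀ i, ∃ c d : ℝ, L i = c • 1 + single m m d)
    (t : Fin r → ℝ) (x y : WithTop ℝ) :
    boundaryForm Q μ m x (interleavedProd (fun τ => exp (τ • Q)) L t) y =
      boundaryForm Q μ m y
        (interleavedProd (fun τ => exp (τ • Q)) (L ∘ Fin.rev) (t ∘ Fin.rev)) x := by
  induction r generalizing x y with
  | zero =>
    obtain ⟨c, d, hL0⟩ := hL 0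
    rw [interleavedProd_zero, interleavedProd_zero, Function.comp_apply, Fin.rev_zero]
    exact hL0 ▸ boundaryForm_smul_one_add_single_comm m hμ hQ x y c d
  | succ r ih =>
    obtain ⟨c, d, hL0⟩ := hL 0
    have ih' := ih (Fin.tail L) (fun i => hL i.succ) (Fin.tail t)
    rw [interleavedProd_succ, interleavedProd_succ', Fin.init_comp_rev, Fin.init_comp_rev,
      Function.comp_apply, Function.comp_apply, Fin.rev_last, Fin.rev_last, hL0,
      boundaryForm_smul_one_add_single_mul m hμ, boundaryForm_mul_mul_smul_one_add_single m hQ,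
      ih', ih', leftBoundary_apply_self, add_comm x]

end Boundary

end HiddenMarkov

open HiddenMarkov

theorem observed_reversible_of_two_rows_eq_general
    (Q : Matrix (Fin 3) (Fin 3) ℝ) (μ : Fin 3 → ℝ)
    {K : ℕ} (E : Matrix (Fin 3) (Fin K) ℝ)
    (hrow : ∀ i : Fin 3, ∑ j, Q i j = 0)
    (hpos : ∀ i, 0 < μ i)
    (hstat : μ ᵥ* Q = 0)
    (hsing : ∃ i j : Fin 3, i ≠ j ∧ (fun k => E i k) = (fun k => E j k)) :
    ∀ (r : ℕ) (s : Fin (r + 1) → Fin K) (t : Fin r → ℝ), (∀ i, 0 ≤ t i) →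
      (μ ᵥ* obsProd Q E s t) ⬝ᵥ (fun _ => (1 : ℝ)) =
        (μ ᵥ* obsProd Q E (s ∘ Fin.rev) (t ∘ Fin.rev)) ⬝ᵥ (fun _ => (1 : ℝ)) := by
  intro r s t _
  obtain ⟨i, j, hij, hEij⟩ := hsing
  obtain ⟨m, hm⟩ := Fin.exists_forall_ne_imp_eq_or_eq hij
  have hL (k : Fin K) : ∃ c d : ℝ, diagonal (fun a => E a k) = c • 1 + single m m d :=
    ⟨_, _, diagonal_eq_smul_one_add_single fun a ha => by
      rcases hm a ha with rfl | rfl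
      exacts [rfl, congrFun hEij.symm k]⟩
  have hQ : Q *ᵥ 1 = 0 := funext fun a => by simpa [mulVec, dotProduct] using hrow a
  have hrev := boundaryForm_interleavedProd_rev m hstat hQ _ (fun i => hL (s i)) t ⊤ ⊤
  simp only [boundaryForm, leftBoundary_top, rightBoundary_top, dotProduct_smul, smul_eq_mul]
    at hrev
  exact mul_left_cancel₀ (hpos m).ne' hrev

/-- If two rows of the state-dependent probability matrix are equal,
then the observed process of the continuous-time three-state hidden Markov model is
reversible. -/
theorem observed_reversible_of_two_rows_eq
    (Q : Matrix (Fin 3) (Fin 3) ℝ) (μ : Fin 3 → ℝ)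
    {K : ℕ} (E : Matrix (Fin 3) (Fin K) ℝ)
    (hoff : ∀ i j : Fin 3, i ≠ j → 0 ≤ Q i j)
    (hrow : ∀ i : Fin 3, ∑ j, Q i j = 0)
    (hpos : ∀ i, 0 < μ i) (hsum : μ 0 + μ 1 + μ 2 = 1)
    (hstat : μ ᵥ* Q = 0)
    (hE0 : ∀ a k, 0 ≤ E a k) (hE1 : ∀ a : Fin 3, ∑ k, E a k = 1)
    (hsing : ∃ i j : Fin 3, i ≠ j ∧ (fun k => E i k) = (fun k => E j k)) :
    ∀ (r : ℕ) (s : Fin (r + 1) → Fin K) (t : Fin r → ℝ), (∀ i, 0 ≤ t i) →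
      (μ ᵥ* obsProd Q E s t) ⬝ᵥ (fun _ => (1 : ℝ)) =
        (μ ᵥ* obsProd Q E (s ∘ Fin.rev) (t ∘ Fin.rev)) ⬝ᵥ (fun _ => (1 : ℝ)) :=
  observed_reversible_of_two_rows_eq_general Q μ E hrow hpos hstat hsing
end

section
/- Let P be a 3×3 row-stochastic matrix with stationary probability row vector μ, set Q = P − I, and suppose the characteristic polynomial of Q is X(X + λ1)(X + λ2) with λ1, λ2 ≠ 0 and λ1 ≠ λ2. Then for every positive integer n, Pⁿ = g_n·L + d_n·Q + f_n·I, where d_n = ((1 − λ2)ⁿ − (1 − λ1)ⁿ)/(λ1 − λ2), f_n = (λ1(1 − λ2)ⁿ − λ2(1 − λ1)ⁿ)/(λ1 − λ2), g_n = 1 − f_n, and L = e·μ is the 3×3 matrix each of whose rows equals μ. -/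
/-!
Write `Q = P - 1` and `L = e μ`. Row sums and stationarity give `Q e = 0`, `μ Q = 0`, hence
`L Q = 0`. Since `0` is a simple root of the characteristic polynomial, `ker Q` is the line
through `e`; by Cayley–Hamilton the columns of `(Q + λ₁)(Q + λ₂)` lie in `ker Q`, and
multiplying on the left by `μ` identifies this matrix as `λ₁ λ₂ L`. In the algebra spanned by
`1, Q, L` this relation reduces `(1 + Q)ⁿ` to the stated combination by induction on `n`.
-/

open Matrix Polynomial

theorem pow_eq_smul_add_smul_add_smul {A : Type*} [Ring A] [Algebra ℝ A] {P L : A}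
    {l1 l2 : ℝ} (hne : l1 ≠ l2) (hLQ : L * (P - 1) = 0)
    (hQ : (P - 1 + algebraMap ℝ A l1) * (P - 1 + algebraMap ℝ A l2) = (l1 * l2) • L)
    (n : ℕ) :
    P ^ n =
      (1 - (l1 * (1 - l2) ^ n - l2 * (1 - l1) ^ n) / (l1 - l2)) • L
        + (((1 - l2) ^ n - (1 - l1) ^ n) / (l1 - l2)) • (P - 1)
        + ((l1 * (1 - l2) ^ n - l2 * (1 - l1) ^ n) / (l1 - l2)) • (1 : A) := by
  set Q := P - 1
  have hQQ : Q * Q = (l1 * l2) • L - (l1 + l2) • Q - (l1 * l2) • 1 := by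
    rw [← hQ]
    simp only [Algebra.algebraMap_eq_smul_one, mul_add, add_mul, smul_mul_assoc, mul_smul_comm,
      mul_one, one_mul]
    module
  induction n with
  | zero => simp [div_self (sub_ne_zero.mpr hne)]
  | succ n ih =>
    rw [pow_succ, ih, show P = Q + 1 by simp [Q]]
    simp only [add_mul, mul_add, smul_mul_assoc, mul_one, one_mul, hLQ, hQQ]
    module

theorem Polynomial.rootMultiplicity_zero_X_mul_X_add_C_mul_X_add_C {K : Type*} [Field K]
    {l1 l2 : K} (h1 : l1 ≠ 0) (h2 : l2 ≠ 0) :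
    (X * (X + C l1) * (X + C l2)).rootMultiplicity 0 = 1 := by
  rw [mul_assoc, rootMultiplicity_mul (by simp [X_ne_zero, X_add_C_ne_zero]),
    rootMultiplicity_eq_zero (p := (X + C l1) * (X + C l2)) (by simp [h1, h2])]
  simpa using rootMultiplicity_X_sub_C_self (x := (0 : K))

namespace Matrix

variable {K n : Type*} [Field K] [Fintype n] [DecidableEq n]

theorem exists_eq_vecMulVec_of_mul_eq_zero {Q M : Matrix n n K} {v : n → K}
    (hQ : Q.charpoly.rootMultiplicity 0 ≤ 1) (hv : v ≠ 0) (hQv : Q *ᵥ v = 0)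
    (hQM : Q * M = 0) : ∃ w, M = vecMulVec v w := by
  have hker : LinearMap.ker (toLin' Q) = Submodule.span K {v} := by
    refine (Submodule.eq_of_le_of_finrank_le ?_ ?_).symm
    · simpa [Submodule.span_singleton_le_iff_mem] using hQv
    · rw [finrank_span_singleton hv, ← Module.End.eigenspace_zero]
      exact (toLin' Q).finrank_eigenspace_le 0 |>.trans (by rwa [charpoly_toLin'])
  have hcol : ∀ j, ∃ c : K, c • v = M.col j := fun j => by
    rw [← Submodule.mem_span_singleton, ← hker, LinearMap.mem_ker, toLin'_apply,
      ← mulVec_single_one, mulVec_mulVec, hQM, zero_mulVec]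
  choose w hw using hcol
  refine ⟨w, ext fun i j => ?_⟩
  simpa [vecMulVec_apply, mul_comm] using (congrFun (hw j) i).symm

theorem eq_vecMulVec_vecMul_of_mul_eq_zero {Q M : Matrix n n K} {v μ : n → K}
    (hQ : Q.charpoly.rootMultiplicity 0 ≤ 1) (hQv : Q *ᵥ v = 0) (hμv : μ ⬝ᵥ v = 1)
    (hQM : Q * M = 0) : M = vecMulVec v (μ ᵥ* M) := by
  have hv : v ≠ 0 := by rintro rfl; simp at hμv
  obtain ⟨w, rfl⟩ := exists_eq_vecMulVec_of_mul_eq_zero hQ hv hQv hQM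
  rw [vecMul_vecMulVec, hμv, one_smul]

end Matrix

theorem pow_eq_gL_add_dQ_add_fI_general (P : Matrix (Fin 3) (Fin 3) ℝ) (μ : Fin 3 → ℝ)
    (lam1 lam2 : ℝ)
    (hP1 : ∀ i : Fin 3, ∑ j, P i j = 1)
    (hsum : μ 0 + μ 1 + μ 2 = 1)
    (hstat : μ ᵥ* P = μ)
    (hchar : (P - 1).charpoly = X * (X + C lam1) * (X + C lam2))
    (hlam1 : lam1 ≠ 0) (hlam2 : lam2 ≠ 0) (hne : lam1 ≠ lam2) :
    ∀ n : ℕ, 1 ≤ n →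
      P ^ n =
        (1 - (lam1 * (1 - lam2) ^ n - lam2 * (1 - lam1) ^ n) / (lam1 - lam2)) •
            Matrix.vecMulVec (fun _ => (1 : ℝ)) μ
          + (((1 - lam2) ^ n - (1 - lam1) ^ n) / (lam1 - lam2)) • (P - 1)
          + ((lam1 * (1 - lam2) ^ n - lam2 * (1 - lam1) ^ n) / (lam1 - lam2)) •
              (1 : Matrix (Fin 3) (Fin 3) ℝ) := by
  set e : Fin 3 → ℝ := fun _ => 1
  set R := (P - 1 + algebraMap ℝ _ lam1) * (P - 1 + algebraMap ℝ _ lam2)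
  have hQe : (P - 1) *ᵥ e = 0 := by
    rw [sub_mulVec, one_mulVec, sub_eq_zero]
    ext i
    simp [mulVec, dotProduct, e, hP1]
  have hμQ : μ ᵥ* (P - 1) = 0 := by rw [vecMul_sub, hstat, vecMul_one, sub_self]
  have hμe : μ ⬝ᵥ e = 1 := by simpa [dotProduct, Fin.sum_univ_three, e] using hsum
  have hmult : (P - 1).charpoly.rootMultiplicity 0 ≤ 1 := by
    rw [hchar, rootMultiplicity_zero_X_mul_X_add_C_mul_X_add_C hlam1 hlam2]
  have hCH : (P - 1) * R = 0 := by
    have h := aeval_self_charpoly (P - 1)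
    simpa only [hchar, map_mul, map_add, aeval_X, aeval_C, mul_assoc] using h
  have hμR : μ ᵥ* R = (lam1 * lam2) • μ := by
    have hμQl : ∀ l : ℝ, μ ᵥ* (P - 1 + algebraMap ℝ _ l) = l • μ := fun l => by
      rw [vecMul_add, hμQ, Algebra.algebraMap_eq_smul_one, vecMul_smul, vecMul_one, zero_add]
    rw [← vecMul_vecMul, hμQl, smul_vecMul, hμQl, smul_smul, mul_comm]
  have hR : R = (lam1 * lam2) • vecMulVec e μ := by
    rw [eq_vecMulVec_vecMul_of_mul_eq_zero hmult hQe hμe hCH, hμR, vecMulVec_smul]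
  intro n _
  exact pow_eq_smul_add_smul_add_smul hne (by rw [vecMulVec_mul, hμQ, vecMulVec_zero]) hR n

/-- For a 3×3 row-stochastic matrix `P` with stationary probability
row vector `μ`, with `Q = P − I` having characteristic polynomial `X(X+λ₁)(X+λ₂)`,
`λ₁, λ₂ ≠ 0`, `λ₁ ≠ λ₂`, the `n`-step transition probability matrix satisfies
`Pⁿ = g_n·L + d_n·Q + f_n·I` where `L = e·μ`,
`d_n = ((1−λ₂)ⁿ − (1−λ₁)ⁿ)/(λ₁−λ₂)`,
`f_n = (λ₁(1−λ₂)ⁿ − λ₂(1−λ₁)ⁿ)/(λ₁−λ₂)` and `g_n = 1 − f_n`. -/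
theorem pow_eq_gL_add_dQ_add_fI (P : Matrix (Fin 3) (Fin 3) ℝ) (μ : Fin 3 → ℝ)
    (lam1 lam2 : ℝ)
    (hP0 : ∀ i j : Fin 3, 0 ≤ P i j)
    (hP1 : ∀ i : Fin 3, ∑ j, P i j = 1)
    (hpos : ∀ i, 0 < μ i) (hsum : μ 0 + μ 1 + μ 2 = 1)
    (hstat : μ ᵥ* P = μ)
    (hchar : (P - 1).charpoly = X * (X + C lam1) * (X + C lam2))
    (hlam1 : lam1 ≠ 0) (hlam2 : lam2 ≠ 0) (hne : lam1 ≠ lam2) :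
    ∀ n : ℕ, 1 ≤ n →
      P ^ n =
        (1 - (lam1 * (1 - lam2) ^ n - lam2 * (1 - lam1) ^ n) / (lam1 - lam2)) •
            Matrix.vecMulVec (fun _ => (1 : ℝ)) μ
          + (((1 - lam2) ^ n - (1 - lam1) ^ n) / (lam1 - lam2)) • (P - 1)
          + ((lam1 * (1 - lam2) ^ n - lam2 * (1 - lam1) ^ n) / (lam1 - lam2)) •
              (1 : Matrix (Fin 3) (Fin 3) ℝ) :=
  pow_eq_gL_add_dQ_add_fI_general P μ lam1 lam2 hP1 hsum hstat hchar hlam1 hlam2 hne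
end

section
/- Let P be a 3×3 row-stochastic matrix with stationary probability row vector μ, set Q = P − I with characteristic polynomial X(X + λ1)(X + λ2), λ1, λ2 ≠ 0, λ1 ≠ λ2, and let ν = μ1·P₁₂ − μ2·P₂₁ be the probability flux. Let Π be a 3×K state-dependent probability matrix with columns φ_k and Λ_k = diag(φ_k). Then for every positive integer n and all observation symbols i, j, μ·Λ_i·Pⁿ·Λ_j·e − μ·Λ_j·Pⁿ·Λ_i·e = (ν·A/(λ1 − λ2))·((1 − λ2)ⁿ − (1 − λ1)ⁿ), where, writing φ_i = (x1, y1, z1)ᵀ and φ_j = (x2, y2, z2)ᵀ, A = (y2 − x2)(x1 − z1) − (x2 − z2)(y1 − x1). -/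
open Matrix Polynomial

private lemma aux3 (P : Matrix (Fin 3) (Fin 3) ℝ) (s t u : ℝ)
    (h2 : (aeval P) ((X:ℝ[X])^3 - C s * X^2 + C t * X - C u) = 0)
    (m : ℕ) (a b : Fin 3) :
    (P ^ (m+3)) a b = s * (P ^ (m+2)) a b - t * (P ^ (m+1)) a b + u * (P ^ m) a b := by
  simp only [map_sub, map_add, _root_.map_mul, map_pow, aeval_X, aeval_C] at h2
  have h5 : P^3 - (s • P^2 - t • P + u • (1 : Matrix (Fin 3) (Fin 3) ℝ)) = 0 := by
    rw [← h2]; simp only [Algebra.smul_def, mul_one]; abel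
  have h5' : P^3 = s • P^2 - t • P + u • 1 := sub_eq_zero.mp h5
  have h4 : P ^ (m+3) = s • P^(m+2) - t • P^(m+1) + u • P^m := by
    calc P^(m+3) = P^m * P^3 := by rw [← pow_add]
    _ = s • P^(m+2) - t • P^(m+1) + u • P^m := by
        rw [h5']; simp only [mul_sub, mul_add, mul_smul_comm, mul_one, ← pow_add, ← pow_succ]
  rw [h4]
  simp [Matrix.sub_apply, Matrix.add_apply, Matrix.smul_apply, smul_eq_mul]

/-- Flux of the 2-dimensional likelihood function of the observed
process of a discrete-time three-state hidden Markov model: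
`Pr{S₀=i, S_n=j} − Pr{S₀=j, S_n=i} = ν·A/(λ₁−λ₂)·((1−λ₂)ⁿ − (1−λ₁)ⁿ)`. -/
theorem flux_two_dim_likelihood_discrete
    (P : Matrix (Fin 3) (Fin 3) ℝ) (μ : Fin 3 → ℝ)
    (lam1 lam2 : ℝ) {K : ℕ} (E : Matrix (Fin 3) (Fin K) ℝ)
    (hP0 : ∀ i j : Fin 3, 0 ≤ P i j)
    (hP1 : ∀ i : Fin 3, ∑ j, P i j = 1)
    (hpos : ∀ i, 0 < μ i) (hsum : μ 0 + μ 1 + μ 2 = 1)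
    (hstat : μ ᵥ* P = μ)
    (hchar : (P - 1).charpoly = X * (X + C lam1) * (X + C lam2))
    (hlam1 : lam1 ≠ 0) (hlam2 : lam2 ≠ 0) (hne : lam1 ≠ lam2)
    (hE0 : ∀ a k, 0 ≤ E a k) (hE1 : ∀ a : Fin 3, ∑ k, E a k = 1)
    (n : ℕ) (hn : 1 ≤ n) (i j : Fin K) :
    (μ ᵥ* Matrix.diagonal (fun a => E a i) ᵥ* (P ^ n) ᵥ*
        Matrix.diagonal (fun a => E a j)) ⬝ᵥ (fun _ => (1 : ℝ)) -
      (μ ᵥ* Matrix.diagonal (fun a => E a j) ᵥ* (P ^ n) ᵥ*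
        Matrix.diagonal (fun a => E a i)) ⬝ᵥ (fun _ => (1 : ℝ)) =
    (μ 0 * P 0 1 - μ 1 * P 1 0) *
        ((E 1 j - E 0 j) * (E 0 i - E 2 i) - (E 0 j - E 2 j) * (E 1 i - E 0 i)) /
        (lam1 - lam2) *
      ((1 - lam2) ^ n - (1 - lam1) ^ n) := by
  -- trace identity
  have htr : P 0 0 + P 1 1 + P 2 2 = 3 - lam1 - lam2 := by
    have ht := Matrix.trace_eq_neg_charpoly_coeff (P - 1)
    rw [hchar] at ht
    have hc : ((X * (X + C lam1) * (X + C lam2) : ℝ[X])).coeff (Fintype.card (Fin 3) - 1)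
        = lam1 + lam2 := by
      have h : (X * (X + C lam1) * (X + C lam2) : ℝ[X])
          = X^3 + C (lam1 + lam2) * X^2 + C (lam1 * lam2) * X := by
        simp only [C_add, C_mul]; ring
      rw [h]
      simp [coeff_add, coeff_X_pow, coeff_C_mul, add_mul, Fintype.card_fin]
    rw [hc] at ht
    have ht2 : (P - 1).trace = P 0 0 + P 1 1 + P 2 2 - 3 := by
      simp [Matrix.trace, Matrix.diag, Fin.sum_univ_three, Matrix.sub_apply, Matrix.one_apply]
    rw [ht2] at ht
    linarith
  -- entry recurrence from Cayley–Hamilton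
  have hrec : ∀ (m : ℕ) (a b : Fin 3), (P ^ (m+3)) a b
      = (3 - lam1 - lam2) * (P ^ (m+2)) a b
      - (3 - 2*lam1 - 2*lam2 + lam1*lam2) * (P ^ (m+1)) a b
      + (1 - lam1 - lam2 + lam1*lam2) * (P ^ m) a b := by
    have hCH := Matrix.aeval_self_charpoly (P - 1)
    rw [hchar] at hCH
    have hq : ((X * (X + C lam1) * (X + C lam2)).comp (X - 1) : ℝ[X])
        = X^3 - C (3 - lam1 - lam2) * X^2 + C (3 - 2*lam1 - 2*lam2 + lam1*lam2) * X
          - C (1 - lam1 - lam2 + lam1*lam2) := by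
      simp only [mul_comp, add_comp, sub_comp, X_comp, C_comp, one_comp,
        C_sub, C_add, C_mul, C_1, map_ofNat]
      ring
    have h2 : (aeval P) ((X * (X + C lam1) * (X + C lam2)).comp (X - 1) : ℝ[X]) = 0 := by
      rw [Polynomial.aeval_comp]
      simpa using hCH
    rw [hq] at h2
    exact fun m a b => aux3 P _ _ _ h2 m a b
  -- row sums of powers
  have hrow : ∀ (m : ℕ) (a : Fin 3),
      (P ^ m) a 0 + (P ^ m) a 1 + (P ^ m) a 2 = 1 := by
    intro m
    induction m with
    | zero => intro a; fin_cases a <;> simp [Matrix.one_apply]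
    | succ m ih =>
      intro a
      have h1 : ∀ k : Fin 3, P k 0 + P k 1 + P k 2 = 1 := by
        intro k; have := hP1 k; simpa [Fin.sum_univ_three] using this
      have e : ∀ b : Fin 3, (P ^ (m+1)) a b
          = (P ^ m) a 0 * P 0 b + (P ^ m) a 1 * P 1 b + (P ^ m) a 2 * P 2 b := by
        intro b
        rw [pow_succ, Matrix.mul_apply, Fin.sum_univ_three]
      rw [e 0, e 1, e 2]
      linear_combination (P ^ m) a 0 * h1 0 + (P ^ m) a 1 * h1 1 + (P ^ m) a 2 * h1 2 + ih a
  -- stationarity for powers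
  have hstatm : ∀ (m : ℕ) (b : Fin 3),
      μ 0 * (P ^ m) 0 b + μ 1 * (P ^ m) 1 b + μ 2 * (P ^ m) 2 b = μ b := by
    intro m
    induction m with
    | zero => intro b; fin_cases b <;> simp [Matrix.one_apply]
    | succ m ih =>
      intro b
      have hs : ∀ c : Fin 3, μ 0 * P 0 c + μ 1 * P 1 c + μ 2 * P 2 c = μ c := by
        intro c
        have := congrFun hstat c
        simpa [Matrix.vecMul, dotProduct, Fin.sum_univ_three] using this
      have e : ∀ a : Fin 3, (P ^ (m+1)) a b
          = (P ^ m) a 0 * P 0 b + (P ^ m) a 1 * P 1 b + (P ^ m) a 2 * P 2 b := by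
        intro a
        rw [pow_succ, Matrix.mul_apply, Fin.sum_univ_three]
      rw [e 0, e 1, e 2]
      linear_combination P 0 b * ih 0 + P 1 b * ih 1 + P 2 b * ih 2 + hs b
  -- flux identities for any power
  have hflux12 : ∀ m : ℕ, μ 1 * (P ^ m) 1 2 - μ 2 * (P ^ m) 2 1
      = μ 0 * (P ^ m) 0 1 - μ 1 * (P ^ m) 1 0 := by
    intro m
    have h1 := hstatm m 1
    have r1 := hrow m 1
    linear_combination μ 1 * r1 - h1
  have hflux20 : ∀ m : ℕ, μ 2 * (P ^ m) 2 0 - μ 0 * (P ^ m) 0 2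
      = μ 0 * (P ^ m) 0 1 - μ 1 * (P ^ m) 1 0 := by
    intro m
    have h0 := hstatm m 0
    have r0 := hrow m 0
    linear_combination h0 - μ 0 * r0
  -- the flux sequence
  set ν : ℝ := μ 0 * P 0 1 - μ 1 * P 1 0 with hν
  have hg1 : μ 0 * (P ^ 1) 0 1 - μ 1 * (P ^ 1) 1 0 = ν := by
    simp [hν]
  have hg0 : μ 0 * (P ^ 0) 0 1 - μ 1 * (P ^ 0) 1 0 = 0 := by
    simp [Matrix.one_apply]
  have hg2 : μ 0 * (P ^ 2) 0 1 - μ 1 * (P ^ 2) 1 0 = ν * (2 - lam1 - lam2) := by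
    have e01 : (P ^ 2) 0 1 = P 0 0 * P 0 1 + P 0 1 * P 1 1 + P 0 2 * P 2 1 := by
      rw [pow_two, Matrix.mul_apply, Fin.sum_univ_three]
    have e10 : (P ^ 2) 1 0 = P 1 0 * P 0 0 + P 1 1 * P 1 0 + P 1 2 * P 2 0 := by
      rw [pow_two, Matrix.mul_apply, Fin.sum_univ_three]
    have f12 : μ 1 * P 1 2 - μ 2 * P 2 1 = ν := by
      have := hflux12 1; simpa using this
    have f20 : μ 2 * P 2 0 - μ 0 * P 0 2 = ν := by
      have := hflux20 1; simpa using this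
    have r2' : P 2 0 + P 2 1 + P 2 2 = 1 := by
      have := hP1 2; simpa [Fin.sum_univ_three] using this
    rw [e01, e10]
    linear_combination (P 0 0 + P 1 1) * hν.symm - P 2 1 * f20 - P 2 0 * f12
      + ν * htr - ν * r2'
  -- closed form for the flux sequence
  have hkey : ∀ m : ℕ, (lam1 - lam2) * (μ 0 * (P ^ m) 0 1 - μ 1 * (P ^ m) 1 0)
      = ν * ((1 - lam2) ^ m - (1 - lam1) ^ m) := by
    have main : ∀ m : ℕ,
        ((lam1 - lam2) * (μ 0 * (P ^ m) 0 1 - μ 1 * (P ^ m) 1 0)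
          = ν * ((1 - lam2) ^ m - (1 - lam1) ^ m))
        ∧ ((lam1 - lam2) * (μ 0 * (P ^ (m+1)) 0 1 - μ 1 * (P ^ (m+1)) 1 0)
          = ν * ((1 - lam2) ^ (m+1) - (1 - lam1) ^ (m+1)))
        ∧ ((lam1 - lam2) * (μ 0 * (P ^ (m+2)) 0 1 - μ 1 * (P ^ (m+2)) 1 0)
          = ν * ((1 - lam2) ^ (m+2) - (1 - lam1) ^ (m+2))) := by
      intro m
      induction m with
      | zero =>
        refine ⟨?_, ?_, ?_⟩
        · rw [hg0]; ring
        · rw [show (0+1) = 1 from rfl]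
          linear_combination (lam1 - lam2) * hg1 + ν * (by ring : (1 - lam2)^1 - (1-lam1)^1 = lam1 - lam2)
        · rw [show (0+2) = 2 from rfl]
          linear_combination (lam1 - lam2) * hg2
      | succ m ih =>
        obtain ⟨c0, c1, c2⟩ := ih
        refine ⟨c1, c2, ?_⟩
        have r01 := hrec m 0 1
        have r10 := hrec m 1 0
        have : (lam1 - lam2) * (μ 0 * (P ^ (m+3)) 0 1 - μ 1 * (P ^ (m+3)) 1 0)
            = ν * ((1 - lam2) ^ (m+3) - (1 - lam1) ^ (m+3)) := by
          rw [r01, r10]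
          linear_combination (3 - lam1 - lam2) * c2
            - (3 - 2*lam1 - 2*lam2 + lam1*lam2) * c1
            + (1 - lam1 - lam2 + lam1*lam2) * c0
        simpa [show m + 1 + 2 = m + 3 from rfl] using this
    exact fun m => (main m).1
  -- expand the LHS and conclude
  set M : Matrix (Fin 3) (Fin 3) ℝ := P ^ n with hM
  have f12 := hflux12 n
  have f20 := hflux20 n
  have key := hkey n
  rw [← hM] at f12 f20 key
  have hLHS : (μ ᵥ* Matrix.diagonal (fun a => E a i) ᵥ* M ᵥ*
        Matrix.diagonal (fun a => E a j)) ⬝ᵥ (fun _ => (1 : ℝ)) -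
      (μ ᵥ* Matrix.diagonal (fun a => E a j) ᵥ* M ᵥ*
        Matrix.diagonal (fun a => E a i)) ⬝ᵥ (fun _ => (1 : ℝ))
      = (μ 0 * M 0 1 - μ 1 * M 1 0) *
        ((E 1 j - E 0 j) * (E 0 i - E 2 i) - (E 0 j - E 2 j) * (E 1 i - E 0 i)) := by
    simp [Matrix.vecMul, dotProduct, Matrix.diagonal, Fin.sum_univ_three]
    linear_combination (E 1 i * E 2 j - E 1 j * E 2 i) * f12
      - (E 0 i * E 2 j - E 0 j * E 2 i) * f20
  rw [hLHS]
  have hd : lam1 - lam2 ≠ 0 := sub_ne_zero.mpr hne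
  field_simp
  linear_combination ((E 1 j - E 0 j) * (E 0 i - E 2 i) - (E 0 j - E 2 j) * (E 1 i - E 0 i)) * key
end

section
/- Let P be a 3×3 row-stochastic matrix with stationary probability row vector μ, set Q = P − I with characteristic polynomial X(X + λ1)(X + λ2), λ1, λ2 ≠ 0, λ1 ≠ λ2, and let ν = μ1·P₁₂ − μ2·P₂₁. Let Π be a 3×K state-dependent probability matrix with columns φ_k and Λ_k = diag(φ_k). Then for all positive integers n, m and every observation symbol i, μ·Λ_i·Pⁿ·Λ_i·Pᵐ·Λ_i·e − μ·Λ_i·Pᵐ·Λ_i·Pⁿ·Λ_i·e = (ν·D/(λ1 − λ2))·((1 − λ2)ⁿ(1 − λ1)ᵐ − (1 − λ1)ⁿ(1 − λ2)ᵐ), where, writing φ_i = (x, y, z)ᵀ, D = (x − y)(y − z)(z − x). -/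
open Matrix Polynomial

set_option maxHeartbeats 1600000 in
/-- Flux of the 3-dimensional likelihood function of the observed
process of a discrete-time three-state hidden Markov model:
`Pr{S₀=S_n=S_{n+m}=i} − Pr{S₀=S_m=S_{m+n}=i}
  = ν·D/(λ₁−λ₂)·((1−λ₂)ⁿ(1−λ₁)ᵐ − (1−λ₁)ⁿ(1−λ₂)ᵐ)` with `D = (x−y)(y−z)(z−x)`. -/
theorem flux_three_dim_likelihood_discrete
    (P : Matrix (Fin 3) (Fin 3) ℝ) (μ : Fin 3 → ℝ)
    (lam1 lam2 : ℝ) {K : ℕ} (E : Matrix (Fin 3) (Fin K) ℝ)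
    (hP0 : ∀ i j : Fin 3, 0 ≤ P i j)
    (hP1 : ∀ i : Fin 3, ∑ j, P i j = 1)
    (hpos : ∀ i, 0 < μ i) (hsum : μ 0 + μ 1 + μ 2 = 1)
    (hstat : μ ᵥ* P = μ)
    (hchar : (P - 1).charpoly = X * (X + C lam1) * (X + C lam2))
    (hlam1 : lam1 ≠ 0) (hlam2 : lam2 ≠ 0) (hne : lam1 ≠ lam2)
    (hE0 : ∀ a k, 0 ≤ E a k) (hE1 : ∀ a : Fin 3, ∑ k, E a k = 1)
    (n m : ℕ) (hn : 1 ≤ n) (hm : 1 ≤ m) (i : Fin K) :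
    (μ ᵥ* Matrix.diagonal (fun a => E a i) ᵥ* (P ^ n) ᵥ*
        Matrix.diagonal (fun a => E a i) ᵥ* (P ^ m) ᵥ*
        Matrix.diagonal (fun a => E a i)) ⬝ᵥ (fun _ => (1 : ℝ)) -
      (μ ᵥ* Matrix.diagonal (fun a => E a i) ᵥ* (P ^ m) ᵥ*
        Matrix.diagonal (fun a => E a i) ᵥ* (P ^ n) ᵥ*
        Matrix.diagonal (fun a => E a i)) ⬝ᵥ (fun _ => (1 : ℝ)) =
    (μ 0 * P 0 1 - μ 1 * P 1 0) *
        ((E 0 i - E 1 i) * (E 1 i - E 2 i) * (E 2 i - E 0 i)) / (lam1 - lam2) *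
      ((1 - lam2) ^ n * (1 - lam1) ^ m - (1 - lam1) ^ n * (1 - lam2) ^ m) := by
  -- basic scalar facts
  have hl12 : lam1 - lam2 ≠ 0 := sub_ne_zero.mpr hne
  have hl21 : lam2 - lam1 ≠ 0 := sub_ne_zero.mpr (Ne.symm hne)
  have hrow0 : P 0 0 + P 0 1 + P 0 2 = 1 := by
    have := hP1 0; rwa [Fin.sum_univ_three] at this
  have hrow1 : P 1 0 + P 1 1 + P 1 2 = 1 := by
    have := hP1 1; rwa [Fin.sum_univ_three] at this
  have hrow2 : P 2 0 + P 2 1 + P 2 2 = 1 := by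
    have := hP1 2; rwa [Fin.sum_univ_three] at this
  have hst : ∀ j : Fin 3, μ 0 * P 0 j + μ 1 * P 1 j + μ 2 * P 2 j = μ j := by
    intro j
    have := congrFun hstat j
    simpa [Matrix.vecMul, dotProduct, Fin.sum_univ_three] using this
  have hst0 := hst 0
  have hst1 := hst 1
  have hst2 := hst 2
  -- coefficients of the characteristic polynomial
  have key : ∀ r : ℝ, det ((charmatrix (P - 1)).map (evalRingHom r))
      = r * (r + lam1) * (r + lam2) := by
    intro r
    have h := congrArg (Polynomial.eval r) hchar
    have h2 := (evalRingHom r).map_det (charmatrix (P - 1))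
    rw [RingHom.mapMatrix_apply] at h2
    rw [Matrix.charpoly] at h
    rw [show Polynomial.eval r (charmatrix (P-1)).det = (evalRingHom r) (charmatrix (P-1)).det
      from rfl, h2] at h
    rw [h]
    simp
  have h0 := key 0
  have h1 := key 1
  have hm1 := key (-1)
  rw [det_fin_three] at h0 h1 hm1
  simp only [Matrix.map_apply, charmatrix_apply, Matrix.diagonal_apply, Matrix.sub_apply,
    Matrix.one_apply, Fin.isValue] at h0 h1 hm1
  norm_num [Fin.ext_iff] at h0 h1 hm1
  have hT1 : lam1 + lam2 = 3 - (P 0 0 + P 1 1 + P 2 2) := by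
    linear_combination h0 - h1/2 - hm1/2
  have hT2 : lam1 * lam2 = (P 0 0 - 1) * (P 1 1 - 1) + (P 0 0 - 1) * (P 2 2 - 1) +
      (P 1 1 - 1) * (P 2 2 - 1) - P 0 1 * P 1 0 - P 0 2 * P 2 0 - P 1 2 * P 2 1 := by
    linear_combination hm1/2 - h1/2
  -- Cayley–Hamilton
  have hP3 : P * (P * P) = (3 - lam1 - lam2) • (P * P)
      - ((1-lam1) + (1-lam2) + (1-lam1)*(1-lam2)) • P
      + ((1-lam1)*(1-lam2)) • (1 : Matrix (Fin 3) (Fin 3) ℝ) := by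
    have hCH := Matrix.aeval_self_charpoly (P - 1)
    rw [hchar] at hCH
    simp only [_root_.map_mul, map_add, aeval_X, aeval_C,
      Algebra.algebraMap_eq_smul_one] at hCH
    have expand : (P - 1) * ((P - 1) + lam1 • (1 : Matrix (Fin 3) (Fin 3) ℝ))
        * ((P - 1) + lam2 • 1)
        = P * (P * P) - ((3 - lam1 - lam2) • (P * P)
        - ((1-lam1) + (1-lam2) + (1-lam1)*(1-lam2)) • P + ((1-lam1)*(1-lam2)) • 1) := by
      simp only [sub_mul, mul_sub, add_mul, mul_add, smul_mul_assoc, mul_smul_comm,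
        mul_one, one_mul, smul_smul, smul_sub, smul_add, mul_assoc]
      module
    rw [expand] at hCH
    exact sub_eq_zero.mp hCH
    -- replaces the sorry: spectral decomposition
  set L := Matrix.diagonal (fun a => E a i) with hL
  set Am : Matrix (Fin 3) (Fin 3) ℝ := Matrix.of (fun _ k => μ k) with hAm
  set B : Matrix (Fin 3) (Fin 3) ℝ :=
    (lam1*(lam1-lam2))⁻¹ • (P*P - (2-lam2) • P + (1-lam2) • 1) with hB
  set Cm : Matrix (Fin 3) (Fin 3) ℝ :=
    (lam2*(lam2-lam1))⁻¹ • (P*P - (2-lam1) • P + (1-lam1) • 1) with hC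
  have hne0 : lam1 * lam2 ≠ 0 := mul_ne_zero hlam1 hlam2
  have hAspec : P*P - (2 - lam1 - lam2) • P + ((1-lam1)*(1-lam2)) • (1 : Matrix (Fin 3) (Fin 3) ℝ)
      = (lam1*lam2) • Am := by
    ext j k
    fin_cases j <;> fin_cases k <;>
      simp only [Matrix.mul_apply, Fin.sum_univ_three, Matrix.one_apply, Matrix.smul_apply,
        Matrix.sub_apply, Matrix.add_apply, hAm, Matrix.of_apply, Fin.isValue,
        smul_eq_mul, if_true, reduceIte, Fin.mk_zero, Fin.mk_one, Fin.reduceFinMk,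
        Fin.reduceEq]
    · linear_combination ((P 2 0)*(μ 0)) * hrow0 + ((-1)*(P 2 1) + (P 2 1)*(μ 0)) * hrow1 + ((-1) + (2)*(μ 0) + (P 1 1) + (-1)*(P 1 1)*(μ 0) + (-1)*(P 0 0)*(μ 0)) * hrow2 + ((-1)*(P 2 0) + (P 1 1)*(P 2 0) + (-1)*(P 1 0)*(P 2 1)) * hsum + ((-1) + (P 0 0)) * hT1 + ((1) + (P 2 1) + (-1)*(P 1 1)) * hst0 + ((-1)*(P 2 0) + (P 1 0)) * hst1 + ((1) + (-1)*(μ 0)) * hT2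
    · linear_combination ((P 2 1) + (P 2 0)*(μ 1)) * hrow0 + ((P 2 1)*(μ 1)) * hrow1 + ((2)*(μ 1) + (-1)*(P 1 1)*(μ 1) + (-1)*(P 0 1) + (-1)*(P 0 0)*(μ 1)) * hrow2 + ((-1)*(P 2 1) + (-1)*(P 0 1)*(P 2 0) + (P 0 0)*(P 2 1)) * hsum + ((P 0 1)) * hT1 + ((-1)*(P 2 1) + (P 0 1)) * hst0 + ((1) + (P 2 0) + (-1)*(P 0 0)) * hst1 + ((-1)*(μ 1)) * hT2
    · linear_combination ((-2) + (lam2) + (lam1) + (P 2 2) + (P 2 0) + (-1)*(P 2 0)*(μ 1) + (-1)*(P 2 0)*(μ 0) + (P 0 0)) * hrow0 + ((P 2 1) + (-1)*(P 2 1)*(μ 1) + (-1)*(P 2 1)*(μ 0) + (P 0 1)) * hrow1 + ((2) + (-2)*(μ 1) + (-2)*(μ 0) + (-1)*(P 1 1) + (P 1 1)*(μ 1) + (P 1 1)*(μ 0) + (-1)*(P 0 0) + (P 0 0)*(μ 1) + (P 0 0)*(μ 0)) * hrow2 + ((-1)*(lam1)*(lam2) + (P 2 1) + (P 2 0) + (-1)*(P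 1 1)*(P 2 0) + (P 1 0)*(P 2 1) + (P 0 1)*(P 2 0) + (-1)*(P 0 0)*(P 2 1)) * hsum + ((1) + (-1)*(P 0 1) + (-1)*(P 0 0)) * hT1 + ((-1) + (P 1 1) + (-1)*(P 0 1)) * hst0 + ((-1) + (-1)*(P 1 0) + (P 0 0)) * hst1 + ((-1) + (μ 1) + (μ 0)) * hT2
    · linear_combination ((P 2 0)*(μ 0)) * hrow0 + ((P 2 1)*(μ 0) + (P 2 0)) * hrow1 + ((2)*(μ 0) + (-1)*(P 1 1)*(μ 0) + (-1)*(P 1 0) + (-1)*(P 0 0)*(μ 0)) * hrow2 + ((-1)*(P 2 0) + (P 1 1)*(P 2 0) + (-1)*(P 1 0)*(P 2 1)) * hsum + ((P 1 0)) * hT1 + ((1) + (P 2 1) + (-1)*(P 1 1)) * hst0 + ((-1)*(P 2 0) + (P 1 0)) * hst1 + ((-1)*(μ 0)) * hT2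
    · linear_combination ((-1)*(P 2 0) + (P 2 0)*(μ 1)) * hrow0 + ((P 2 1)*(μ 1)) * hrow1 + ((-1) + (2)*(μ 1) + (-1)*(P 1 1)*(μ 1) + (P 0 0) + (-1)*(P 0 0)*(μ 1)) * hrow2 + ((-1)*(P 2 1) + (-1)*(P 0 1)*(P 2 0) + (P 0 0)*(P 2 1)) * hsum + ((-1) + (P 1 1)) * hT1 + ((-1)*(P 2 1) + (P 0 1)) * hst0 + ((1) + (P 2 0) + (-1)*(P 0 0)) * hst1 + ((1) + (-1)*(μ 1)) * hT2
    · linear_combination ((P 2 0) + (-1)*(P 2 0)*(μ 1) + (-1)*(P 2 0)*(μ 0) + (P 1 0)) * hrow0 + ((-2) + (lam2) + (lam1) + (P 2 2) + (P 2 1) + (-1)*(P 2 1)*(μ 1) + (-1)*(P 2 1)*(μ 0) + (P 1 1)) * hrow1 + ((2) + (-2)*(μ 1) + (-2)*(μ 0) + (-1)*(P 1 1) + (P 1 1)*(μ 1) + (P 1 1)*(μ 0) + (-1)*(P 0 0) + (P 0 0)*(μ 1) + (P 0 0)*(μ 0)) * hrow2 + ((-1)*(lam1)*(lam2) + (P 2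 1) + (P 2 0) + (-1)*(P 1 1)*(P 2 0) + (P 1 0)*(P 2 1) + (P 0 1)*(P 2 0) + (-1)*(P 0 0)*(P 2 1)) * hsum + ((1) + (-1)*(P 1 1) + (-1)*(P 1 0)) * hT1 + ((-1) + (P 1 1) + (-1)*(P 0 1)) * hst0 + ((-1) + (-1)*(P 1 0) + (P 0 0)) * hst1 + ((-1) + (μ 1) + (μ 0)) * hT2
    · linear_combination ((P 2 0)*(μ 0)) * hrow0 + ((P 2 1)*(μ 0)) * hrow1 + ((2)*(μ 0) + (-1)*(P 1 1)*(μ 0) + (-1)*(P 0 0)*(μ 0)) * hrow2 + ((-1)*(P 2 0) + (P 1 1)*(P 2 0) + (-1)*(P 1 0)*(P 2 1)) * hsum + ((P 2 0)) * hT1 + ((1) + (P 2 1) + (-1)*(P 1 1)) * hst0 + ((-1)*(P 2 0) + (P 1 0)) * hst1 + ((-1)*(μ 0)) * hT2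
    · linear_combination ((P 2 0)*(μ 1)) * hrow0 + ((P 2 1)*(μ 1)) * hrow1 + ((2)*(μ 1) + (-1)*(P 1 1)*(μ 1) + (-1)*(P 0 0)*(μ 1)) * hrow2 + ((-1)*(P 2 1) + (-1)*(P 0 1)*(P 2 0) + (P 0 0)*(P 2 1)) * hsum + ((P 2 1)) * hT1 + ((-1)*(P 2 1) + (P 0 1)) * hst0 + ((1) + (P 2 0) + (-1)*(P 0 0)) * hst1 + ((-1)*(μ 1)) * hT2
    · linear_combination ((P 2 0) + (-1)*(P 2 0)*(μ 1) + (-1)*(P 2 0)*(μ 0)) * hrow0 + ((P 2 1) + (-1)*(P 2 1)*(μ 1) + (-1)*(P 2 1)*(μ 0)) * hrow1 + ((-1) + (lam2) + (lam1) + (-2)*(μ 1) + (-2)*(μ 0) + (P 2 2) + (P 1 1)*(μ 1) + (P 1 1)*(μ 0) + (P 0 0)*(μ 1) + (P 0 0)*(μ 0)) * hrow2 + ((-1)*(lam1)*(lam2) + (P 2 1) + (P 2 0) + (-1)*(P 1 1)*(P 2 0) + (P 1 0)*(P 2 1) + (P 0 1)*(P 2 0) + (-1)*(P 0 0)*(P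 2 1)) * hsum + ((-1)*(P 2 1) + (-1)*(P 2 0)) * hT1 + ((-1) + (P 1 1) + (-1)*(P 0 1)) * hst0 + ((-1) + (-1)*(P 1 0) + (P 0 0)) * hst1 + ((μ 1) + (μ 0)) * hT2
  have hAmrep : Am = (lam1*lam2)⁻¹ • (P*P - (2 - lam1 - lam2) • P
      + ((1-lam1)*(1-lam2)) • (1 : Matrix (Fin 3) (Fin 3) ℝ)) := by
    rw [hAspec, smul_smul, inv_mul_cancel₀ hne0, one_smul]
  have hMPB : (P*P - (2-lam2) • P + (1-lam2) • (1 : Matrix (Fin 3) (Fin 3) ℝ)) * P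
      = (1-lam1) • (P*P - (2-lam2) • P + (1-lam2) • 1) := by
    simp only [sub_mul, add_mul, smul_mul_assoc, one_mul]
    rw [mul_assoc, hP3]
    module
  have hMPC : (P*P - (2-lam1) • P + (1-lam1) • (1 : Matrix (Fin 3) (Fin 3) ℝ)) * P
      = (1-lam2) • (P*P - (2-lam1) • P + (1-lam1) • 1) := by
    simp only [sub_mul, add_mul, smul_mul_assoc, one_mul]
    rw [mul_assoc, hP3]
    module
  have hBP : B * P = (1-lam1) • B := by
    rw [hB, smul_mul_assoc, hMPB, smul_comm]
  have hCP : Cm * P = (1-lam2) • Cm := by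
    rw [hC, smul_mul_assoc, hMPC, smul_comm]
  have hAP : Am * P = Am := by
    ext j k
    simp only [Matrix.mul_apply, Fin.sum_univ_three, hAm, Matrix.of_apply]
    exact hst k
  have hABC1 : Am + B + Cm = 1 := by
    rw [hAmrep, hB, hC]
    match_scalars <;> field_simp <;> ring
  have hbase : P = Am + (1-lam1) • B + (1-lam2) • Cm := by
    have h1 : (Am + B + Cm) * P = 1 * P := by rw [hABC1]
    rw [add_mul, add_mul, hAP, hBP, hCP, one_mul] at h1
    exact h1.symm
  clear_value B Cm
  have hPow : ∀ N : ℕ, P^(N+1) = Am + ((1-lam1)^(N+1)) • B + ((1-lam2)^(N+1)) • Cm := by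
    intro N
    induction N with
    | zero => simpa [pow_one] using hbase
    | succ k ih =>
      rw [pow_succ, ih, add_mul, add_mul, smul_mul_assoc, smul_mul_assoc, hAP, hBP, hCP,
        smul_smul, smul_smul, ← pow_succ, ← pow_succ]
    -- the trilinear form
  set G : Matrix (Fin 3) (Fin 3) ℝ → Matrix (Fin 3) (Fin 3) ℝ → ℝ :=
    fun M N => (μ ᵥ* L ᵥ* M ᵥ* L ᵥ* N ᵥ* L) ⬝ᵥ (fun _ => (1:ℝ)) with hG
  have vsmulM : ∀ (v : Fin 3 → ℝ) (c : ℝ) (M : Matrix (Fin 3) (Fin 3) ℝ),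
      v ᵥ* (c • M) = c • (v ᵥ* M) := by
    intro v c M; ext k
    simp [Matrix.vecMul, dotProduct, Fin.sum_univ_three]
    ring
  have hexp : ∀ α β γ δ : ℝ, G (Am + α • B + β • Cm) (Am + γ • B + δ • Cm)
      = G Am Am + γ * G Am B + δ * G Am Cm + α * G B Am + α*γ * G B B + α*δ * G B Cm
        + β * G Cm Am + β*γ * G Cm B + β*δ * G Cm Cm := by
    intro α β γ δ
    simp only [hG, Matrix.vecMul_add, vsmulM, Matrix.add_vecMul, Matrix.smul_vecMul,
      add_dotProduct, smul_dotProduct, smul_eq_mul]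
    ring
  have hsym : ∀ Nn : Matrix (Fin 3) (Fin 3) ℝ, G Am Nn = G Nn Am := by
    intro Nn
    simp only [hG]
    simp [Matrix.vecMul, dotProduct, Fin.sum_univ_three, hAm, Matrix.of_apply, hL,
      Matrix.diagonal_apply, Fin.mk_zero, Fin.mk_one, Fin.reduceFinMk, Fin.reduceEq]
    ring
  have hflux : G 1 P - G P 1
      = -((μ 0 * P 0 1 - μ 1 * P 1 0) *
        ((E 0 i - E 1 i) * (E 1 i - E 2 i) * (E 2 i - E 0 i))) := by
    simp only [hG, Matrix.vecMul_one]
    simp only [Matrix.vecMul, dotProduct, Fin.sum_univ_three, hL,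
      Matrix.diagonal_apply, Fin.mk_zero, Fin.mk_one, Fin.reduceFinMk, Fin.reduceEq,
      if_true, reduceIte, mul_zero, zero_mul, add_zero, zero_add, mul_one, one_mul]
    linear_combination ((E 0 i)*(E 2 i)*(E 0 i - E 2 i)) * (μ 0 * hrow0 - hst0)
      + ((E 1 i)*(E 2 i)*(E 1 i - E 2 i)) * (μ 1 * hrow1 - hst1)
  have e1 : (1 : Matrix (Fin 3) (Fin 3) ℝ) = Am + (1:ℝ) • B + (1:ℝ) • Cm := by
    rw [one_smul, one_smul]; exact hABC1.symm
  have key1 : G 1 P - G P 1 = (lam1 - lam2) * (G B Cm - G Cm B) := by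
    rw [e1, hbase, hexp, hexp]
    linear_combination (-lam1) * hsym B + (-lam2) * hsym Cm
  have hval : G B Cm - G Cm B = -((μ 0 * P 0 1 - μ 1 * P 1 0) *
      ((E 0 i - E 1 i) * (E 1 i - E 2 i) * (E 2 i - E 0 i))) / (lam1 - lam2) := by
    rw [eq_div_iff hl12]
    linear_combination hflux - key1
  obtain ⟨n', rfl⟩ : ∃ k, n = k + 1 := ⟨n - 1, by omega⟩
  obtain ⟨m', rfl⟩ : ∃ k, m = k + 1 := ⟨m - 1, by omega⟩
  show G (P ^ (n'+1)) (P ^ (m'+1)) - G (P ^ (m'+1)) (P ^ (n'+1)) = _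
  rw [hPow n', hPow m', hexp, hexp]
  linear_combination (((1-lam1)^(m'+1)) - ((1-lam1)^(n'+1))) * hsym B
    + (((1-lam2)^(m'+1)) - ((1-lam2)^(n'+1))) * hsym Cm
    + (((1-lam1)^(n'+1))*((1-lam2)^(m'+1)) - ((1-lam1)^(m'+1))*((1-lam2)^(n'+1))) * hval
end
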